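/- arXiv:2310.15474 — 6 statements merged into one kernel-verified Lean document; each statement's English description precedes it below -/
import Mathlib

section
/- Let n ≥ 2 be an integer. The number of maximal chains of the poset P_{2,n} equals 2·C_{n-1} − 1, where C_m denotes the m-th Catalan number. -/
/-- The underlying set of the poset `P_{2,n}`: pairs `(b, (i,j))` with `b : Bool`
(`false` for a ξ-variable, `true` for a ψ-variable) and `1 ≤ i < j ≤ n`. -/
def P2 (n : ℕ) : Type :=
  {p : Bool × ℕ × ℕ // 1 ≤ p.2.1 ∧ p.2.1 < p.2.2 ∧ p.2.2 ≤ n}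

/-- The partial order on `P_{2,n}`: `(b,(i,j)) ≤ (c,(k,l))` iff either
`b = c`, `i ≤ k` and `j ≤ l`, or `b = false`, `c = true` and
((`i = 1` and `j ≤ l`) or (`i ≤ k` and `l = n`)). -/
instance P2.instPartialOrder (n : ℕ) : PartialOrder (P2 n) where
  le a b :=
    (a.1.1 = b.1.1 ∧ a.1.2.1 ≤ b.1.2.1 ∧ a.1.2.2 ≤ b.1.2.2) ∨
    (a.1.1 = false ∧ b.1.1 = true ∧
      ((a.1.2.1 = 1 ∧ a.1.2.2 ≤ b.1.2.2) ∨ (a.1.2.1 ≤ b.1.2.1 ∧ b.1.2.2 = n)))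
  le_refl a := Or.inl ⟨rfl, le_rfl, le_rfl⟩
  le_trans := by
    rintro ⟨⟨ab, ai, aj⟩, ha1, ha2, ha3⟩ ⟨⟨bb, bi, bj⟩, hb1, hb2, hb3⟩
      ⟨⟨cb, ci, cj⟩, hc1, hc2, hc3⟩ hab hbc
    replace ha1 : 1 ≤ ai := ha1
    replace ha2 : ai < aj := ha2
    replace ha3 : aj ≤ n := ha3
    replace hb1 : 1 ≤ bi := hb1
    replace hb2 : bi < bj := hb2
    replace hb3 : bj ≤ n := hb3
    replace hc1 : 1 ≤ ci := hc1
    replace hc2 : ci < cj := hc2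
    replace hc3 : cj ≤ n := hc3
    have hab' : (ab = bb ∧ ai ≤ bi ∧ aj ≤ bj) ∨
        (ab = false ∧ bb = true ∧ ((ai = 1 ∧ aj ≤ bj) ∨ (ai ≤ bi ∧ bj = n))) := hab
    have hbc' : (bb = cb ∧ bi ≤ ci ∧ bj ≤ cj) ∨
        (bb = false ∧ cb = true ∧ ((bi = 1 ∧ bj ≤ cj) ∨ (bi ≤ ci ∧ cj = n))) := hbc
    show (ab = cb ∧ ai ≤ ci ∧ aj ≤ cj) ∨
        (ab = false ∧ cb = true ∧ ((ai = 1 ∧ aj ≤ cj) ∨ (ai ≤ ci ∧ cj = n)))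
    rcases hab' with ⟨e1, h1⟩ | ⟨e1, e1', h1⟩ <;> rcases hbc' with ⟨e2, h2⟩ | ⟨e2, e2', h2⟩
    · exact Or.inl ⟨e1.trans e2, by omega, by omega⟩
    · exact Or.inr ⟨e1.trans e2, e2', by omega⟩
    · exact Or.inr ⟨e1, e2 ▸ e1', by omega⟩
    · exact absurd (e1'.symm.trans e2) (by simp)
  le_antisymm := by
    rintro ⟨⟨ab, ai, aj⟩, ha1, ha2, ha3⟩ ⟨⟨bb, bi, bj⟩, hb1, hb2, hb3⟩ hab hba
    have hab' : (ab = bb ∧ ai ≤ bi ∧ aj ≤ bj) ∨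
        (ab = false ∧ bb = true ∧ ((ai = 1 ∧ aj ≤ bj) ∨ (ai ≤ bi ∧ bj = n))) := hab
    have hba' : (bb = ab ∧ bi ≤ ai ∧ bj ≤ aj) ∨
        (bb = false ∧ ab = true ∧ ((bi = 1 ∧ bj ≤ aj) ∨ (bi ≤ ai ∧ aj = n))) := hba
    rcases hab' with ⟨e1, h1⟩ | ⟨e1, e1', h1⟩ <;> rcases hba' with ⟨e2, h2⟩ | ⟨e2, e2', h2⟩
    · have hii : ai = bi := by omega
      have hjj : aj = bj := by omega
      subst hii; subst hjj; cases e1; rfl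
    · exact absurd (e1.symm.trans e2') (by simp [e2])
    · exact absurd (e2.symm.trans e1') (by simp [e1])
    · exact absurd (e1'.symm.trans e2) (by simp)

namespace P2Aux

/-- Ballot numbers: paths from `(p,q)` down to `(0,0)` keeping `p ≤ q`. -/
def Bb (p q : ℕ) : ℕ := (p + q).choose p - (p + q).choose (q + 1)

lemma Bb_zero (q : ℕ) : Bb 0 q = 1 := by
  simp [Bb, Nat.choose_eq_zero_of_lt (by omega : q < q + 1)]

lemma Bb_succ_self (q : ℕ) : Bb (q + 1) q = 0 := by
  simp [Bb, show q + 1 + q = q + (q + 1) by omega]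

lemma choose_mono_left {m : ℕ} : ∀ {b a : ℕ}, a ≤ b → 2 * b ≤ m + 1 →
    m.choose a ≤ m.choose b := by
  intro b
  induction b with
  | zero => intro a ha _; interval_cases a; rfl
  | succ k ih =>
    intro a ha hm
    rcases Nat.eq_or_lt_of_le ha with rfl | ha'
    · rfl
    have h1 : m.choose a ≤ m.choose k := ih (by omega) (by omega)
    rcases Nat.lt_or_ge (2 * (k + 1)) (m + 1) with h | h
    · exact h1.trans (Nat.choose_le_succ_of_lt_half_left (by omega))
    · have hm' : m = 2 * k + 1 := by omega
      have : m.choose k = m.choose (k + 1) := by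
        rw [← Nat.choose_symm (by omega : k + 1 ≤ m), hm']
        congr 1 <;> omega
      omega

lemma Bb_rec {p q : ℕ} (hp : 1 ≤ p) (hpq : p ≤ q) :
    Bb p q = Bb (p - 1) q + Bb p (q - 1) := by
  obtain ⟨p, rfl⟩ : ∃ p', p = p' + 1 := ⟨p - 1, by omega⟩
  obtain ⟨q, rfl⟩ : ∃ q', q = q' + 1 := ⟨q - 1, by omega⟩
  simp only [Bb, Nat.add_sub_cancel]
  rw [show p + 1 + (q + 1) = (p + q + 1) + 1 by omega,
      show p + (q + 1) = p + q + 1 by omega,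
      show p + 1 + q = p + q + 1 by omega]
  set m := p + q + 1 with hm
  have pas1 : (m + 1).choose (p + 1) = m.choose p + m.choose (p + 1) :=
    Nat.choose_succ_succ _ _
  have pas2 : (m + 1).choose (q + 1 + 1) = m.choose (q + 1) + m.choose (q + 1 + 1) :=
    Nat.choose_succ_succ _ _
  have i1 : m.choose (q + 1 + 1) ≤ m.choose p := by
    rcases Nat.eq_zero_or_pos p with rfl | hp'
    · simp [Nat.choose_eq_zero_of_lt (by omega : m < q + 1 + 1)]
    · have hsymm : m.choose (q + 2) = m.choose (p - 1) := by
        rw [← Nat.choose_symm (by omega : q + 2 ≤ m)]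
        congr 1 <;> omega
      rw [show q + 1 + 1 = q + 2 by omega, hsymm]
      exact choose_mono_left (by omega) (by omega)
  have i2 : m.choose (q + 1) ≤ m.choose (p + 1) := by
    have hsymm : m.choose (q + 1) = m.choose p := by
      rw [← Nat.choose_symm (by omega : q + 1 ≤ m)]
      congr 1 <;> omega
    rw [hsymm]
    exact choose_mono_left (by omega) (by omega)
  omega

lemma Bb_self (q : ℕ) : Bb q q = catalan q := by
  have hcs : (2 * q).choose (q + 1) * (q + 1) = (2 * q).choose q * q := by
    have := Nat.choose_succ_right_eq (2 * q) q
    rwa [show 2 * q - q = q by omega] at this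
  have hle : (2 * q).choose (q + 1) ≤ (2 * q).choose q := by
    have h : (2 * q).choose (q + 1) * (q + 1) ≤ (2 * q).choose q * (q + 1) := by
      calc (2 * q).choose (q + 1) * (q + 1) = (2 * q).choose q * q := hcs
        _ ≤ (2 * q).choose q * (q + 1) := Nat.mul_le_mul_left _ (by omega)
    exact Nat.le_of_mul_le_mul_right h (by omega)
  have key : (q + 1) * Bb q q = q.centralBinom := by
    have hbb : Bb q q = (2 * q).choose q - (2 * q).choose (q + 1) := by
      simp only [Bb]; rw [show q + q = 2 * q by omega]
    rw [hbb, Nat.mul_sub, Nat.centralBinom]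
    rw [show (q+1) * (2*q).choose (q+1) = (2*q).choose (q+1) * (q+1) by ring, hcs]
    have : (q + 1) * (2 * q).choose q = q * (2 * q).choose q + (2 * q).choose q := by ring
    rw [this, show (2*q).choose q * q = q * (2*q).choose q by ring]
    omega
  have : Bb q q = q.centralBinom / (q + 1) := by
    rw [← key, Nat.mul_div_cancel_left _ (by omega : 0 < q + 1)]
  rw [this, catalan_eq_centralBinom_div]

lemma Bb_one {q : ℕ} (hq : 1 ≤ q) : Bb 1 q = q := by
  have h1 : (1 + q).choose 1 = 1 + q := Nat.choose_one_right _
  have h2 : (1 + q).choose (q + 1) = 1 := by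
    rw [show 1 + q = q + 1 by omega]; exact Nat.choose_self _
  simp [Bb, h1, h2]

/-- Partial column sums of ballot numbers. -/
def T (w m : ℕ) : ℕ := ∑ p ∈ Finset.range (m + 1), Bb p w

lemma T_succ (w m : ℕ) : T w (m + 1) = T w m + Bb (m + 1) w := by
  simp [T, Finset.sum_range_succ]

lemma T_pos (w m : ℕ) : 1 ≤ T w m := by
  induction m with
  | zero => simp [T, Bb_zero]
  | succ k ih => rw [T_succ]; omega

lemma T_eq (w : ℕ) : ∀ m, m ≤ w + 1 → T w m = Bb m (w + 1) := by
  intro m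
  induction m with
  | zero => intro _; simp [T, Bb_zero]
  | succ k ih =>
    intro hk
    rw [T_succ, ih (by omega)]
    have := Bb_rec (p := k + 1) (q := w + 1) (by omega) hk
    simpa using this.symm

/-- Number of maximal chains upward from `(true,(i,j))`. -/
def G (n i j : ℕ) : ℕ := Bb (n - j) (n - 1 - i)

lemma G_rec {n i j : ℕ} (h1 : 1 ≤ i) (h2 : i < j) (h3 : j ≤ n)
    (hne : ¬(i = n - 1 ∧ j = n)) :
    G n i j = (if i + 1 < j then G n (i + 1) j else 0) +
      (if j < n then G n i (j + 1) else 0) := by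
  have eL : G n i j = Bb (n - j) (n - 1 - i) := rfl
  rcases Nat.lt_or_ge j n with hj | hj
  · -- j < n
    have hrec := Bb_rec (p := n - j) (q := n - 1 - i) (by omega) (by omega)
    have e2 : G n i (j + 1) = Bb (n - j - 1) (n - 1 - i) := by
      simp only [G]; congr 1 <;> omega
    rcases Nat.lt_or_ge (i + 1) j with hij | hij
    · rw [if_pos hij, if_pos hj]
      have e1 : G n (i + 1) j = Bb (n - j) (n - 1 - i - 1) := by
        simp only [G]; congr 1 <;> omega
      rw [eL, e1, e2]; omega
    · rw [if_neg (show ¬ i + 1 < j by omega), if_pos hj]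
      have hz : Bb (n - j) (n - 1 - i - 1) = 0 := by
        rw [show n - j = (n - 1 - i - 1) + 1 by omega]
        exact Bb_succ_self _
      rw [eL, e2]; omega
  · -- j = n
    have hi : i ≠ n - 1 := fun h => hne ⟨h, by omega⟩
    rw [if_pos (show i + 1 < j by omega), if_neg (show ¬ j < n by omega)]
    have e1 : G n i j = 1 := by
      rw [eL, show n - j = 0 by omega]; exact Bb_zero _
    have e2 : G n (i + 1) j = 1 := by
      rw [show G n (i+1) j = Bb (n - j) (n - 1 - (i+1)) from rfl,
        show n - j = 0 by omega]
      exact Bb_zero _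
    omega

/-- Number of maximal chains upward from `(false,(i,j))`. -/
def Fc (n i j : ℕ) : ℕ :=
  (if i + 1 < j ∧ j ≤ n then Fc n (i + 1) j else 0) +
    (if j < n then Fc n i (j + 1) else 0) +
    (if i = 1 ∨ j = n then G n i j else 0)
termination_by (n - i) + (n - j)
decreasing_by
  · omega
  · omega

lemma Fc_interior_aux {n : ℕ} : ∀ m i j, (n - i) + (n - j) ≤ m → 2 ≤ i → i < j → j ≤ n →
    Fc n i j = Bb (n - j + 1) (n - i) := by
  intro m
  induction m with
  | zero => intro i j hm h2 hij hj; omega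
  | succ m ih =>
    intro i j hm h2 hij hj
    rw [Fc]
    by_cases hj' : j = n
    · rw [if_neg (show ¬ j < n by omega),
        if_pos (show i = 1 ∨ j = n from Or.inr hj')]
      have eG : G n i j = 1 := by
        rw [show G n i j = Bb (n - j) (n - 1 - i) from rfl, show n - j = 0 by omega]
        exact Bb_zero _
      have etgt : Bb (n - j + 1) (n - i) = n - i := by
        rw [show n - j = 0 by omega]; exact Bb_one (by omega)
      rcases Nat.lt_or_ge (i + 1) n with hin | hin
      · rw [if_pos (show i + 1 < j ∧ j ≤ n by omega),
          ih (i + 1) j (by omega) (by omega) (by omega) hj]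
        have e1 : Bb (n - j + 1) (n - (i + 1)) = n - (i + 1) := by
          rw [show n - j = 0 by omega]; exact Bb_one (by omega)
        rw [e1, eG, etgt]; omega
      · rw [if_neg (show ¬(i + 1 < j ∧ j ≤ n) by omega), eG, etgt]; omega
    · -- j < n, interior: no cross term
      have hjn : j < n := by omega
      rw [if_neg (show ¬(i = 1 ∨ j = n) by omega), if_pos hjn,
          ih i (j + 1) (by omega) h2 (by omega) (by omega)]
      have hrec := Bb_rec (p := n - j + 1) (q := n - i) (by omega) (by omega)
      have e2 : Bb (n - (j + 1) + 1) (n - i) = Bb (n - j + 1 - 1) (n - i) := by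
        congr 1 <;> omega
      rcases Nat.lt_or_ge (i + 1) j with hij' | hij'
      · rw [if_pos (show i + 1 < j ∧ j ≤ n by omega),
          ih (i + 1) j (by omega) (by omega) (by omega) hj]
        rw [e2, show n - (i + 1) = n - i - 1 by omega]
        omega
      · rw [if_neg (show ¬(i + 1 < j ∧ j ≤ n) by omega)]
        have hz : Bb (n - j + 1) (n - i - 1) = 0 := by
          rw [show n - j + 1 = (n - i - 1) + 1 by omega]
          exact Bb_succ_self _
        rw [e2]; omega

lemma Fc_interior {n i j : ℕ} (h2 : 2 ≤ i) (hij : i < j) (hj : j ≤ n) :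
    Fc n i j = Bb (n - j + 1) (n - i) :=
  Fc_interior_aux (2 * n) i j (by omega) h2 hij hj

lemma Fc_one {n : ℕ} (hn : 2 ≤ n) : ∀ m j, 2 ≤ j → j ≤ n → n - j = m →
    Fc n 1 j = T (n - 2) (n - j) + T (n - 2) (n - j + 1) - 1 := by
  intro m
  induction m with
  | zero =>
    intro j h2 hj hm
    have hjn : j = n := by omega
    have eG : G n 1 j = 1 := by
      rw [show G n 1 j = Bb (n - j) (n - 1 - 1) from rfl, show n - j = 0 by omega]
      exact Bb_zero _
    have hT0 : T (n - 2) (n - j) = 1 := by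
      rw [show n - j = 0 by omega]; simp [T, Bb_zero]
    have hT1 : T (n - 2) (n - j + 1) = 1 + Bb 1 (n - 2) := by
      rw [show n - j = 0 by omega, T_succ, show T (n-2) 0 = 1 by simp [T, Bb_zero]]
    rw [Fc, if_neg (show ¬ j < n by omega),
      if_pos (show (1:ℕ) = 1 ∨ j = n from Or.inl rfl), eG, hT0, hT1]
    by_cases h3 : 2 < n
    · rw [if_pos (show 1 + 1 < j ∧ j ≤ n by omega),
        show (1:ℕ) + 1 = 2 from rfl,
        Fc_interior (le_rfl) (by omega) (show j ≤ n from le_of_eq hjn),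
        show n - j + 1 = 1 by omega, Bb_one (by omega)]
      omega
    · rw [if_neg (show ¬(1 + 1 < j ∧ j ≤ n) by omega)]
      rw [show n - 2 = 0 by omega, show Bb 1 0 = 0 from Bb_succ_self 0]
  | succ m ih =>
    intro j h2 hj hm
    have hjn : j < n := by omega
    have eG : G n 1 j = Bb (n - j) (n - 2) := by
      rw [show G n 1 j = Bb (n - j) (n - 1 - 1) from rfl]; congr 1 <;> omega
    have hTa : T (n - 2) (n - j) = T (n - 2) (n - (j + 1)) + Bb (n - j) (n - 2) := by
      rw [show n - j = (n - (j + 1)) + 1 by omega, T_succ,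
        show n - (j+1) + 1 = n - j by omega]
    have hTb : T (n - 2) (n - j + 1) = T (n - 2) (n - j) + Bb (n - j + 1) (n - 2) := by
      rw [T_succ]
    have hpos1 := T_pos (n - 2) (n - (j + 1))
    have hpos2 := T_pos (n - 2) (n - (j + 1) + 1)
    have hpos3 := T_pos (n - 2) (n - j)
    rw [Fc, if_pos hjn, if_pos (show (1:ℕ) = 1 ∨ j = n from Or.inl rfl),
      ih (j + 1) (by omega) (by omega) (by omega), eG]
    by_cases h3 : 1 + 1 < j
    · rw [if_pos (show 1 + 1 < j ∧ j ≤ n by omega),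
        show (1:ℕ) + 1 = 2 from rfl,
        Fc_interior (le_rfl) (by omega) (show j ≤ n by omega)]
      rw [show n - (j + 1) + 1 = n - j by omega] at *
      omega
    · have hj2 : j = 2 := by omega
      subst hj2
      rw [if_neg (show ¬(1 + 1 < 2 ∧ 2 ≤ n) by omega)]
      have hz : Bb (n - 2 + 1) (n - 2) = 0 := Bb_succ_self _
      rw [show n - (2 + 1) + 1 = n - 2 by omega] at *
      omega

lemma Fc_final {n : ℕ} (hn : 2 ≤ n) : Fc n 1 2 = 2 * catalan (n - 1) - 1 := by
  have h := Fc_one hn (n - 2) 2 le_rfl hn rfl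
  have hT2 : T (n - 2) (n - 2) = catalan (n - 1) := by
    rw [T_eq (n - 2) (n - 2) (by omega)]
    have hrec : Bb (n - 1) (n - 1) = Bb (n - 1 - 1) (n - 1) + Bb (n - 1) (n - 1 - 1) :=
      Bb_rec (by omega) le_rfl
    have hz : Bb (n - 1) (n - 1 - 1) = 0 := by
      rw [show n - 1 = (n - 1 - 1) + 1 by omega]; exact Bb_succ_self _
    have hself := Bb_self (n - 1)
    rw [show n - 2 + 1 = n - 1 by omega, show n - 2 = n - 1 - 1 by omega]
    omega
  have hT3 : T (n - 2) (n - 2 + 1) = catalan (n - 1) := by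
    rw [T_succ, hT2]
    have hz : Bb (n - 2 + 1) (n - 2) = 0 := Bb_succ_self _
    omega
  rw [h, hT2, hT3]
  omega

end P2Aux

namespace P2N

variable {n : ℕ}

def mk (b : Bool) (i j : ℕ) (h : 1 ≤ i ∧ i < j ∧ j ≤ n) : P2 n := ⟨(b, i, j), h⟩

instance : DecidableEq (P2 n) := fun a b => decidable_of_iff (a.1 = b.1) Subtype.ext_iff.symm

lemma le_mk {b c : Bool} {i j k l : ℕ} {h h'} :
    (mk b i j h : P2 n) ≤ mk c k l h' ↔
      ((b = c ∧ i ≤ k ∧ j ≤ l) ∨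
        (b = false ∧ c = true ∧ ((i = 1 ∧ j ≤ l) ∨ (i ≤ k ∧ l = n)))) := Iff.rfl

lemma eq_mk {b c : Bool} {i j k l : ℕ} {h h'} :
    (mk b i j h : P2 n) = mk c k l h' ↔ (b = c ∧ i = k ∧ j = l) := by
  constructor
  · intro e
    have e' : ((b, i, j) : Bool × ℕ × ℕ) = (c, k, l) := congrArg Subtype.val e
    simpa using e'
  · rintro ⟨rfl, rfl, rfl⟩; rfl

lemma lt_mk {b c : Bool} {i j k l : ℕ} {h h'} :
    (mk b i j h : P2 n) < mk c k l h' ↔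
      (((b = c ∧ i ≤ k ∧ j ≤ l) ∨
        (b = false ∧ c = true ∧ ((i = 1 ∧ j ≤ l) ∨ (i ≤ k ∧ l = n)))) ∧
        ¬(b = c ∧ i = k ∧ j = l)) := by
  rw [lt_iff_le_and_ne]
  exact and_congr le_mk (not_congr eq_mk)

/-- Every element of `P2 n` is a `mk`. -/
lemma exists_mk (x : P2 n) : ∃ b i j h, x = mk b i j h :=
  ⟨x.1.1, x.1.2.1, x.1.2.2, x.2, rfl⟩

lemma covby_iff {b c : Bool} {i j k l : ℕ} {h h'} :
    (mk b i j h : P2 n) ⋖ mk c k l h' ↔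
      ((b = c ∧ ((k = i + 1 ∧ l = j) ∨ (k = i ∧ l = j + 1))) ∨
        (b = false ∧ c = true ∧ k = i ∧ l = j ∧ (i = 1 ∨ j = n))) := by
  obtain ⟨h1, h2, h3⟩ := h
  obtain ⟨h1', h2', h3'⟩ := h'
  constructor
  · rintro ⟨hlt, hmax⟩
    rw [lt_mk] at hlt
    obtain ⟨hle, hne⟩ := hlt
    rcases hle with ⟨hbc, hik, hjl⟩ | ⟨hbf, hct, hcross⟩
    · -- same copy
      subst hbc
      refine Or.inl ⟨rfl, ?_⟩
      by_contra hs
      push_neg at hs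
      by_cases hik' : i < k
      · by_cases hij1 : i + 1 < j
        · have hv : 1 ≤ i + 1 ∧ i + 1 < j ∧ j ≤ n := by omega
          have lz1 : (mk b i j ⟨h1, h2, h3⟩ : P2 n) < mk b (i+1) j hv :=
            lt_mk.mpr ⟨Or.inl ⟨rfl, by omega, by omega⟩, by omega⟩
          have lz2 : (mk b (i+1) j hv : P2 n) < mk b k l ⟨h1', h2', h3'⟩ :=
            lt_mk.mpr ⟨Or.inl ⟨rfl, by omega, by omega⟩, by
              rintro ⟨-, e1, e2⟩
              exact absurd (hs.1 e1.symm) (by omega)⟩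
          exact hmax lz1 lz2
        · -- i + 1 = j, so j ≤ k < l hence j < l
          have hv : 1 ≤ i ∧ i < j + 1 ∧ j + 1 ≤ n := by omega
          have lz1 : (mk b i j ⟨h1, h2, h3⟩ : P2 n) < mk b i (j+1) hv :=
            lt_mk.mpr ⟨Or.inl ⟨rfl, by omega, by omega⟩, by omega⟩
          have lz2 : (mk b i (j+1) hv : P2 n) < mk b k l ⟨h1', h2', h3'⟩ :=
            lt_mk.mpr ⟨Or.inl ⟨rfl, by omega, by omega⟩, by omega⟩
          exact hmax lz1 lz2
      · -- i = k, j < l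
        have hjl' : j < l := by
          rcases Nat.lt_or_ge j l with hq | hq
          · exact hq
          · exfalso; exact hne ⟨rfl, by omega, by omega⟩
        have hlj1 : l ≠ j + 1 := fun e => absurd (hs.2 (by omega)) (by omega)
        have hv : 1 ≤ i ∧ i < j + 1 ∧ j + 1 ≤ n := by omega
        have lz1 : (mk b i j ⟨h1, h2, h3⟩ : P2 n) < mk b i (j+1) hv :=
          lt_mk.mpr ⟨Or.inl ⟨rfl, by omega, by omega⟩, by omega⟩
        have lz2 : (mk b i (j+1) hv : P2 n) < mk b k l ⟨h1', h2', h3'⟩ :=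
          lt_mk.mpr ⟨Or.inl ⟨rfl, by omega, by omega⟩, by omega⟩
        exact hmax lz1 lz2
    · -- cross
      subst hbf; subst hct
      refine Or.inr ⟨rfl, rfl, ?_⟩
      by_contra hs
      push_neg at hs
      rcases hcross with ⟨hi1, hjl⟩ | ⟨hik, hln⟩
      · -- i = 1
        have hnot : ¬(k = i ∧ l = j) := fun ⟨e1, e2⟩ => (hs e1 e2).1 hi1
        have hv : 1 ≤ (1:ℕ) ∧ 1 < j ∧ j ≤ n := by omega
        have lz1 : (mk false i j ⟨h1, h2, h3⟩ : P2 n) < mk true 1 j hv :=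
          lt_mk.mpr ⟨Or.inr ⟨rfl, rfl, Or.inl ⟨hi1, le_rfl⟩⟩, by simp⟩
        have lz2 : (mk true 1 j hv : P2 n) < mk true k l ⟨h1', h2', h3'⟩ :=
          lt_mk.mpr ⟨Or.inl ⟨rfl, by omega, by omega⟩, by
            rintro ⟨-, e1, e2⟩; exact hnot ⟨by omega, by omega⟩⟩
        exact hmax lz1 lz2
      · -- l = n
        have hnot : ¬(k = i ∧ l = j) := fun ⟨e1, e2⟩ => (hs e1 e2).2 (by omega)
        by_cases hki : k = i
        · -- then l ≠ j, and l = n, so j < n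
          have hjn : j < n := by
            rcases Nat.lt_or_ge j n with hq | hq
            · exact hq
            · exfalso; exact hnot ⟨hki, by omega⟩
          have hv : 1 ≤ i ∧ i < j + 1 ∧ j + 1 ≤ n := by omega
          have lz1 : (mk false i j ⟨h1, h2, h3⟩ : P2 n) < mk false i (j+1) hv :=
            lt_mk.mpr ⟨Or.inl ⟨rfl, by omega, by omega⟩, by omega⟩
          have lz2 : (mk false i (j+1) hv : P2 n) < mk true k l ⟨h1', h2', h3'⟩ :=
            lt_mk.mpr ⟨Or.inr ⟨rfl, rfl, Or.inr ⟨by omega, hln⟩⟩, by simp⟩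
          exact hmax lz1 lz2
        · -- i < k
          have hv : 1 ≤ i ∧ i < n ∧ n ≤ n := by omega
          have lz1 : (mk false i j ⟨h1, h2, h3⟩ : P2 n) < mk true i n hv :=
            lt_mk.mpr ⟨Or.inr ⟨rfl, rfl, Or.inr ⟨le_rfl, rfl⟩⟩, by simp⟩
          have lz2 : (mk true i n hv : P2 n) < mk true k l ⟨h1', h2', h3'⟩ :=
            lt_mk.mpr ⟨Or.inl ⟨rfl, by omega, by omega⟩, by
              rintro ⟨-, e1, e2⟩; exact hki e1.symm⟩
          exact hmax lz1 lz2
  · -- backward: the specified pairs are covers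
    intro hspec
    constructor
    · rcases hspec with ⟨hbc, hd⟩ | ⟨hbf, hct, hk, hl, hbd⟩
      · exact lt_mk.mpr ⟨Or.inl ⟨hbc, by omega, by omega⟩, by
          rintro ⟨-, e1, e2⟩; omega⟩
      · subst hbf; subst hct
        refine lt_mk.mpr ⟨Or.inr ⟨rfl, rfl, ?_⟩, by simp⟩
        rcases hbd with h | h
        · exact Or.inl ⟨h, by omega⟩
        · exact Or.inr ⟨by omega, by omega⟩
    · intro z hxz hzy
      obtain ⟨zb, zi, zj, hz, rfl⟩ := exists_mk z
      rw [lt_mk] at hxz hzy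
      obtain ⟨hz1, hz2, hz3⟩ := hz
      obtain ⟨hle1, hne1⟩ := hxz
      obtain ⟨hle2, hne2⟩ := hzy
      rcases hspec with ⟨hbc, hd⟩ | ⟨hbf, hct, hk, hl, hbd⟩ <;>
        rcases hle1 with ⟨e1, f1, g1⟩ | ⟨e1, e1', f1⟩ <;>
          rcases hle2 with ⟨e2, f2, g2⟩ | ⟨e2, e2', f2⟩ <;>
            subst_eqs <;> simp_all <;> omega
  done

end P2N

namespace Part2

open P2N

variable {n : ℕ}

def bot (hn : 2 ≤ n) : P2 n := mk false 1 2 ⟨le_rfl, by omega, hn⟩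
def top (hn : 2 ≤ n) : P2 n := mk true (n-1) n ⟨by omega, by omega, le_rfl⟩

lemma bot_le (hn : 2 ≤ n) (x : P2 n) : bot hn ≤ x := by
  obtain ⟨b, i, j, ⟨h1, h2, h3⟩, rfl⟩ := exists_mk x
  cases b
  · exact le_mk.mpr (Or.inl ⟨rfl, by omega, by omega⟩)
  · exact le_mk.mpr (Or.inr ⟨rfl, rfl, Or.inl ⟨rfl, by omega⟩⟩)

lemma le_top (hn : 2 ≤ n) (x : P2 n) : x ≤ top hn := by
  obtain ⟨b, i, j, ⟨h1, h2, h3⟩, rfl⟩ := exists_mk x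
  cases b
  · exact le_mk.mpr (Or.inr ⟨rfl, rfl, Or.inr ⟨by omega, rfl⟩⟩)
  · exact le_mk.mpr (Or.inl ⟨rfl, by omega, by omega⟩)

lemma lt_top (hn : 2 ≤ n) {x : P2 n} (hx : x ≠ top hn) : x < top hn :=
  lt_of_le_of_ne (le_top hn x) hx

def rk (x : P2 n) : ℕ := x.1.2.1 + x.1.2.2 + (if x.1.1 then 1 else 0)

lemma rk_mk {b i j h} : rk (mk b i j h : P2 n) = i + j + (if b then 1 else 0) := rfl

lemma rk_le (x : P2 n) : rk x ≤ 2 * n := by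
  obtain ⟨b, i, j, ⟨h1, h2, h3⟩, rfl⟩ := exists_mk x
  cases b <;> simp [rk_mk] <;> omega

lemma rk_top (hn : 2 ≤ n) : rk (top hn) = 2 * n := by
  simp [top, rk_mk]; omega

lemma rk_covby {x y : P2 n} (h : x ⋖ y) : rk y = rk x + 1 := by
  obtain ⟨b, i, j, hx, rfl⟩ := exists_mk x
  obtain ⟨c, k, l, hy, rfl⟩ := exists_mk y
  rw [covby_iff] at h
  rcases h with ⟨rfl, ⟨rfl, rfl⟩ | ⟨rfl, rfl⟩⟩ | ⟨rfl, rfl, rfl, rfl, -⟩ <;>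
    first
      | (cases b <;> simp [rk_mk] <;> omega)
      | (simp [rk_mk] <;> omega)

instance : Finite (P2 n) := by
  apply Finite.of_injective
    (f := fun x : P2 n => (x.1.1,
      (⟨x.1.2.1, by obtain ⟨h1, h2, h3⟩ := x.2; omega⟩ : Fin (n+1)),
      (⟨x.1.2.2, by obtain ⟨h1, h2, h3⟩ := x.2; omega⟩ : Fin (n+1))))
  rintro ⟨⟨ab, ai, aj⟩, _⟩ ⟨⟨bb, bi, bj⟩, _⟩ hab
  simp only [Prod.mk.injEq, Fin.mk.injEq] at hab
  apply Subtype.ext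
  simp [hab.1, hab.2.1, hab.2.2]

/-- The type of cover-paths from `x` to the top. -/
def CP (hn : 2 ≤ n) (x : P2 n) : Type :=
  {l : List (P2 n) //
    List.Chain (· ⋖ ·) x l ∧ (x :: l).getLast (List.cons_ne_nil x l) = top hn}

lemma pairwise_of_chain {x : P2 n} {l : List (P2 n)}
    (h : List.Chain (· ⋖ ·) x l) : List.Pairwise (· < ·) (x :: l) :=
  List.isChain_iff_pairwise.mp ((show List.IsChain (· ⋖ ·) (x :: l) from h).imp (fun _ _ hc => hc.lt))

instance (hn : 2 ≤ n) (x : P2 n) : Finite (CP hn x) := by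
  classical
  haveI := Fintype.ofFinite (P2 n)
  haveI := (List.finite_length_le (P2 n) (Fintype.card (P2 n))).to_subtype
  apply Finite.of_injective
    (f := fun p : CP hn x =>
      (⟨p.1, by
        have hp := pairwise_of_chain p.2.1
        have hnd : (x :: p.1).Nodup := hp.imp (fun hc => ne_of_lt hc)
        have := hnd.length_le_card
        simp only [List.length_cons] at this
        show p.1.length ≤ _
        omega⟩ : {l : List (P2 n) | l.length ≤ Fintype.card (P2 n)}))
  rintro ⟨l1, h1⟩ ⟨l2, h2⟩ h
  simp only [Subtype.mk.injEq] at h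
  exact Subtype.ext h

lemma card_CP_top (hn : 2 ≤ n) : Nat.card (CP hn (top hn)) = 1 := by
  rw [Nat.card_eq_one_iff_unique]
  constructor
  · constructor
    rintro ⟨l1, hc1, he1⟩ ⟨l2, hc2, he2⟩
    have key : ∀ l : List (P2 n), List.Chain (· ⋖ ·) (top hn) l → l = [] := by
      rintro (_ | ⟨y, t⟩) hcl
      · rfl
      · exfalso
        have hy := (List.chain_cons.mp hcl).1
        have := rk_covby hy
        have := rk_le y
        have := rk_top hn
        omega
    obtain rfl := key l1 hc1
    obtain rfl := key l2 hc2
    rfl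
  · exact ⟨⟨[], List.Chain.nil, rfl⟩⟩

def stepEquiv (hn : 2 ≤ n) (x : P2 n) (hx : x ≠ top hn) :
    CP hn x ≃ Σ y : {y : P2 n // x ⋖ y}, CP hn y.1 where
  toFun p :=
    match p with
    | ⟨[], _, he⟩ => absurd he hx
    | ⟨y :: t, hc, he⟩ =>
        ⟨⟨y, (List.chain_cons.mp hc).1⟩, ⟨t, (List.chain_cons.mp hc).2, by
          rwa [List.getLast_cons (List.cons_ne_nil y t)] at he⟩⟩
  invFun q := ⟨q.1.1 :: q.2.1, List.chain_cons.mpr ⟨q.1.2, q.2.2.1⟩, by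
      rw [List.getLast_cons (List.cons_ne_nil _ _)]; exact q.2.2.2⟩
  left_inv := by
    rintro ⟨l, hc, he⟩
    cases l with
    | nil => exact absurd he hx
    | cons y t => rfl
  right_inv := by rintro ⟨⟨y, hy⟩, ⟨t, hc, he⟩⟩; rfl

lemma card_CP_step (hn : 2 ≤ n) (x : P2 n) (hx : x ≠ top hn)
    (s : Finset (P2 n)) (hs : ∀ y, y ∈ s ↔ x ⋖ y) :
    Nat.card (CP hn x) = ∑ y ∈ s, Nat.card (CP hn y) := by
  classical
  letI : Fintype {y : P2 n // x ⋖ y} := Fintype.ofFinite _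
  letI : ∀ y : {y : P2 n // x ⋖ y}, Fintype (CP hn y.1) := fun y => Fintype.ofFinite _
  rw [Nat.card_congr (stepEquiv hn x hx), Nat.card_eq_fintype_card, Fintype.card_sigma,
    Finset.sum_subtype s hs (fun y => Nat.card (CP hn y))]
  exact Finset.sum_congr rfl (fun y _ => (Nat.card_eq_fintype_card (α := CP hn y.1)).symm)

end Part2

namespace Part2

open P2N P2Aux

variable {n : ℕ}

def cnt (x : P2 n) : ℕ :=
  if x.1.1 = true then P2Aux.G n x.1.2.1 x.1.2.2 else P2Aux.Fc n x.1.2.1 x.1.2.2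

lemma cnt_mk_true {i j h} : cnt (mk true i j h : P2 n) = P2Aux.G n i j := rfl
lemma cnt_mk_false {i j h} : cnt (mk false i j h : P2 n) = P2Aux.Fc n i j := rfl

lemma card_CP_eq (hn : 2 ≤ n) : ∀ m (x : P2 n), 2 * n + 1 - rk x ≤ m →
    Nat.card (CP hn x) = cnt x := by
  intro m
  induction m with
  | zero => intro x hm; have := rk_le x; omega
  | succ m ih =>
    intro x hm
    by_cases hx : x = top hn
    · subst hx
      rw [card_CP_top hn]
      show 1 = cnt (mk true (n-1) n _)
      rw [cnt_mk_true, P2Aux.G, Nat.sub_self, Nat.sub_self, P2Aux.Bb_zero]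
    · obtain ⟨b, i, j, ⟨h1, h2, h3⟩, rfl⟩ := exists_mk x
      have hrk : ∀ y : P2 n, (mk b i j ⟨h1, h2, h3⟩ : P2 n) ⋖ y →
          Nat.card (CP hn y) = cnt y := fun y hy =>
        ih y (by have := rk_covby hy; omega)
      cases b
      · -- b = false
        by_cases c3 : i = 1 ∨ j = n
        · by_cases c1 : i + 1 < j <;> by_cases c2 : j < n
          · -- A, B, C
            have hv1 : 1 ≤ i + 1 ∧ i + 1 < j ∧ j ≤ n := by omega
            have hv2 : 1 ≤ i ∧ i < j + 1 ∧ j + 1 ≤ n := by omega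
            have covA : (mk false i j ⟨h1,h2,h3⟩ : P2 n) ⋖ mk false (i+1) j hv1 :=
              covby_iff.mpr (Or.inl ⟨rfl, Or.inl ⟨rfl, rfl⟩⟩)
            have covB : (mk false i j ⟨h1,h2,h3⟩ : P2 n) ⋖ mk false i (j+1) hv2 :=
              covby_iff.mpr (Or.inl ⟨rfl, Or.inr ⟨rfl, rfl⟩⟩)
            have covC : (mk false i j ⟨h1,h2,h3⟩ : P2 n) ⋖ mk true i j ⟨h1,h2,h3⟩ :=
              covby_iff.mpr (Or.inr ⟨rfl, rfl, rfl, rfl, c3⟩)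
            have harith : P2Aux.Fc n i j =
                P2Aux.Fc n (i+1) j + P2Aux.Fc n i (j+1) + P2Aux.G n i j := by
              rw [P2Aux.Fc, if_pos (show i + 1 < j ∧ j ≤ n from ⟨c1, h3⟩), if_pos c2, if_pos c3]
            rw [card_CP_step hn _ hx
              {mk false (i+1) j hv1, mk false i (j+1) hv2, mk true i j ⟨h1,h2,h3⟩} ?_]
            · rw [Finset.sum_insert (by
                  rw [Finset.mem_insert, Finset.mem_singleton, eq_mk, eq_mk]
                  rintro (⟨-, -, e⟩ | ⟨e, -, -⟩)
                  · omega
                  · simp at e),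
                Finset.sum_insert (by
                  rw [Finset.mem_singleton, eq_mk]
                  rintro ⟨e, -, -⟩
                  simp at e),
                Finset.sum_singleton, hrk _ covA, hrk _ covB, hrk _ covC]
              simp only [cnt_mk_false, cnt_mk_true]
              omega
            · intro y
              obtain ⟨yb, yi, yj, hy, rfl⟩ := exists_mk y
              rw [Finset.mem_insert, Finset.mem_insert, Finset.mem_singleton,
                eq_mk, eq_mk, eq_mk, covby_iff]
              constructor
              · rintro (⟨rfl, rfl, rfl⟩ | ⟨rfl, rfl, rfl⟩ | ⟨rfl, rfl, rfl⟩)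
                · exact Or.inl ⟨rfl, Or.inl ⟨rfl, rfl⟩⟩
                · exact Or.inl ⟨rfl, Or.inr ⟨rfl, rfl⟩⟩
                · exact Or.inr ⟨rfl, rfl, rfl, rfl, c3⟩
              · rintro (⟨rfl, ⟨rfl, rfl⟩ | ⟨rfl, rfl⟩⟩ | ⟨-, rfl, rfl, rfl, -⟩)
                · exact Or.inl ⟨rfl, rfl, rfl⟩
                · exact Or.inr (Or.inl ⟨rfl, rfl, rfl⟩)
                · exact Or.inr (Or.inr ⟨rfl, rfl, rfl⟩)
          · -- A, C
            have hv1 : 1 ≤ i + 1 ∧ i + 1 < j ∧ j ≤ n := by omega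
            have covA : (mk false i j ⟨h1,h2,h3⟩ : P2 n) ⋖ mk false (i+1) j hv1 :=
              covby_iff.mpr (Or.inl ⟨rfl, Or.inl ⟨rfl, rfl⟩⟩)
            have covC : (mk false i j ⟨h1,h2,h3⟩ : P2 n) ⋖ mk true i j ⟨h1,h2,h3⟩ :=
              covby_iff.mpr (Or.inr ⟨rfl, rfl, rfl, rfl, c3⟩)
            have harith : P2Aux.Fc n i j =
                P2Aux.Fc n (i+1) j + P2Aux.G n i j := by
              rw [P2Aux.Fc, if_pos (show i + 1 < j ∧ j ≤ n from ⟨c1, h3⟩), if_neg c2, if_pos c3]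
              omega
            rw [card_CP_step hn _ hx
              {mk false (i+1) j hv1, mk true i j ⟨h1,h2,h3⟩} ?_]
            · rw [Finset.sum_insert (by
                  rw [Finset.mem_singleton, eq_mk]
                  rintro ⟨e, -, -⟩
                  simp at e),
                Finset.sum_singleton, hrk _ covA, hrk _ covC]
              simp only [cnt_mk_false, cnt_mk_true]
              omega
            · intro y
              obtain ⟨yb, yi, yj, hy, rfl⟩ := exists_mk y
              rw [Finset.mem_insert, Finset.mem_singleton, eq_mk, eq_mk, covby_iff]
              constructor
              · rintro (⟨rfl, rfl, rfl⟩ | ⟨rfl, rfl, rfl⟩)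
                · exact Or.inl ⟨rfl, Or.inl ⟨rfl, rfl⟩⟩
                · exact Or.inr ⟨rfl, rfl, rfl, rfl, c3⟩
              · rintro (⟨rfl, ⟨rfl, rfl⟩ | ⟨rfl, rfl⟩⟩ | ⟨-, rfl, rfl, rfl, -⟩)
                · exact Or.inl ⟨rfl, rfl, rfl⟩
                · exact absurd hy.2.2 (by omega)
                · exact Or.inr ⟨rfl, rfl, rfl⟩
          · -- B, C
            have hv2 : 1 ≤ i ∧ i < j + 1 ∧ j + 1 ≤ n := by omega
            have covB : (mk false i j ⟨h1,h2,h3⟩ : P2 n) ⋖ mk false i (j+1) hv2 :=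
              covby_iff.mpr (Or.inl ⟨rfl, Or.inr ⟨rfl, rfl⟩⟩)
            have covC : (mk false i j ⟨h1,h2,h3⟩ : P2 n) ⋖ mk true i j ⟨h1,h2,h3⟩ :=
              covby_iff.mpr (Or.inr ⟨rfl, rfl, rfl, rfl, c3⟩)
            have harith : P2Aux.Fc n i j =
                P2Aux.Fc n i (j+1) + P2Aux.G n i j := by
              rw [P2Aux.Fc, if_neg (show ¬(i + 1 < j ∧ j ≤ n) by omega), if_pos c2, if_pos c3]
              omega
            rw [card_CP_step hn _ hx
              {mk false i (j+1) hv2, mk true i j ⟨h1,h2,h3⟩} ?_]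
            · rw [Finset.sum_insert (by
                  rw [Finset.mem_singleton, eq_mk]
                  rintro ⟨e, -, -⟩
                  simp at e),
                Finset.sum_singleton, hrk _ covB, hrk _ covC]
              simp only [cnt_mk_false, cnt_mk_true]
              omega
            · intro y
              obtain ⟨yb, yi, yj, hy, rfl⟩ := exists_mk y
              rw [Finset.mem_insert, Finset.mem_singleton, eq_mk, eq_mk, covby_iff]
              constructor
              · rintro (⟨rfl, rfl, rfl⟩ | ⟨rfl, rfl, rfl⟩)
                · exact Or.inl ⟨rfl, Or.inr ⟨rfl, rfl⟩⟩
                · exact Or.inr ⟨rfl, rfl, rfl, rfl, c3⟩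
              · rintro (⟨rfl, ⟨rfl, rfl⟩ | ⟨rfl, rfl⟩⟩ | ⟨-, rfl, rfl, rfl, -⟩)
                · exact absurd hy.2.1 (by omega)
                · exact Or.inl ⟨rfl, rfl, rfl⟩
                · exact Or.inr ⟨rfl, rfl, rfl⟩
          · -- C only
            have covC : (mk false i j ⟨h1,h2,h3⟩ : P2 n) ⋖ mk true i j ⟨h1,h2,h3⟩ :=
              covby_iff.mpr (Or.inr ⟨rfl, rfl, rfl, rfl, c3⟩)
            have harith : P2Aux.Fc n i j = P2Aux.G n i j := by
              rw [P2Aux.Fc, if_neg (show ¬(i + 1 < j ∧ j ≤ n) by omega),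
                if_neg c2, if_pos c3]
              omega
            rw [card_CP_step hn _ hx {mk true i j ⟨h1,h2,h3⟩} ?_]
            · rw [Finset.sum_singleton, hrk _ covC]
              simp only [cnt_mk_false, cnt_mk_true]
              omega
            · intro y
              obtain ⟨yb, yi, yj, hy, rfl⟩ := exists_mk y
              rw [Finset.mem_singleton, eq_mk, covby_iff]
              constructor
              · rintro ⟨rfl, rfl, rfl⟩
                exact Or.inr ⟨rfl, rfl, rfl, rfl, c3⟩
              · rintro (⟨rfl, ⟨rfl, rfl⟩ | ⟨rfl, rfl⟩⟩ | ⟨-, rfl, rfl, rfl, -⟩)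
                · exact absurd hy.2.1 (by omega)
                · exact absurd hy.2.2 (by omega)
                · exact ⟨rfl, rfl, rfl⟩
        · -- no cross: c3 false, then j < n necessarily
          have c2 : j < n := by
            rcases Nat.lt_or_ge j n with hq | hq
            · exact hq
            · exact absurd (Or.inr (by omega)) c3
          by_cases c1 : i + 1 < j
          · -- A, B
            have hv1 : 1 ≤ i + 1 ∧ i + 1 < j ∧ j ≤ n := by omega
            have hv2 : 1 ≤ i ∧ i < j + 1 ∧ j + 1 ≤ n := by omega
            have covA : (mk false i j ⟨h1,h2,h3⟩ : P2 n) ⋖ mk false (i+1) j hv1 :=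
              covby_iff.mpr (Or.inl ⟨rfl, Or.inl ⟨rfl, rfl⟩⟩)
            have covB : (mk false i j ⟨h1,h2,h3⟩ : P2 n) ⋖ mk false i (j+1) hv2 :=
              covby_iff.mpr (Or.inl ⟨rfl, Or.inr ⟨rfl, rfl⟩⟩)
            have harith : P2Aux.Fc n i j =
                P2Aux.Fc n (i+1) j + P2Aux.Fc n i (j+1) := by
              rw [P2Aux.Fc, if_pos (show i + 1 < j ∧ j ≤ n from ⟨c1, h3⟩), if_pos c2, if_neg c3]
              omega
            rw [card_CP_step hn _ hx
              {mk false (i+1) j hv1, mk false i (j+1) hv2} ?_]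
            · rw [Finset.sum_insert (by
                  rw [Finset.mem_singleton, eq_mk]
                  rintro ⟨-, -, e⟩
                  omega),
                Finset.sum_singleton, hrk _ covA, hrk _ covB]
              simp only [cnt_mk_false]
              omega
            · intro y
              obtain ⟨yb, yi, yj, hy, rfl⟩ := exists_mk y
              rw [Finset.mem_insert, Finset.mem_singleton, eq_mk, eq_mk, covby_iff]
              constructor
              · rintro (⟨rfl, rfl, rfl⟩ | ⟨rfl, rfl, rfl⟩)
                · exact Or.inl ⟨rfl, Or.inl ⟨rfl, rfl⟩⟩
                · exact Or.inl ⟨rfl, Or.inr ⟨rfl, rfl⟩⟩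
              · rintro (⟨rfl, ⟨rfl, rfl⟩ | ⟨rfl, rfl⟩⟩ | ⟨-, rfl, rfl, rfl, hbd⟩)
                · exact Or.inl ⟨rfl, rfl, rfl⟩
                · exact Or.inr ⟨rfl, rfl, rfl⟩
                · exact absurd hbd c3
          · -- B only
            have hv2 : 1 ≤ i ∧ i < j + 1 ∧ j + 1 ≤ n := by omega
            have covB : (mk false i j ⟨h1,h2,h3⟩ : P2 n) ⋖ mk false i (j+1) hv2 :=
              covby_iff.mpr (Or.inl ⟨rfl, Or.inr ⟨rfl, rfl⟩⟩)
            have harith : P2Aux.Fc n i j = P2Aux.Fc n i (j+1) := by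
              rw [P2Aux.Fc, if_neg (show ¬(i + 1 < j ∧ j ≤ n) by omega), if_pos c2, if_neg c3]
              omega
            rw [card_CP_step hn _ hx {mk false i (j+1) hv2} ?_]
            · rw [Finset.sum_singleton, hrk _ covB]
              simp only [cnt_mk_false]
              omega
            · intro y
              obtain ⟨yb, yi, yj, hy, rfl⟩ := exists_mk y
              rw [Finset.mem_singleton, eq_mk, covby_iff]
              constructor
              · rintro ⟨rfl, rfl, rfl⟩
                exact Or.inl ⟨rfl, Or.inr ⟨rfl, rfl⟩⟩
              · rintro (⟨rfl, ⟨rfl, rfl⟩ | ⟨rfl, rfl⟩⟩ | ⟨-, rfl, rfl, rfl, hbd⟩)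
                · exact absurd hy.2.1 (by omega)
                · exact ⟨rfl, rfl, rfl⟩
                · exact absurd hbd c3
      · -- b = true
        have hne : ¬(i = n - 1 ∧ j = n) := by
          rintro ⟨e1, e2⟩
          exact hx (eq_mk.mpr ⟨rfl, e1, e2⟩)
        by_cases c1 : i + 1 < j <;> by_cases c2 : j < n
        · -- both steps
          have hv1 : 1 ≤ i + 1 ∧ i + 1 < j ∧ j ≤ n := by omega
          have hv2 : 1 ≤ i ∧ i < j + 1 ∧ j + 1 ≤ n := by omega
          have covA : (mk true i j ⟨h1,h2,h3⟩ : P2 n) ⋖ mk true (i+1) j hv1 :=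
            covby_iff.mpr (Or.inl ⟨rfl, Or.inl ⟨rfl, rfl⟩⟩)
          have covB : (mk true i j ⟨h1,h2,h3⟩ : P2 n) ⋖ mk true i (j+1) hv2 :=
            covby_iff.mpr (Or.inl ⟨rfl, Or.inr ⟨rfl, rfl⟩⟩)
          rw [card_CP_step hn _ hx {mk true (i+1) j hv1, mk true i (j+1) hv2} ?_]
          · rw [Finset.sum_insert (by rw [Finset.mem_singleton, eq_mk]; rintro ⟨-, e, -⟩; omega),
              Finset.sum_singleton, hrk _ covA, hrk _ covB, cnt_mk_true, cnt_mk_true,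
              cnt_mk_true, G_rec h1 h2 h3 hne, if_pos c1, if_pos c2]
          · intro y
            obtain ⟨yb, yi, yj, hy, rfl⟩ := exists_mk y
            rw [Finset.mem_insert, Finset.mem_singleton, eq_mk, eq_mk, covby_iff]
            constructor
            · rintro (⟨rfl, rfl, rfl⟩ | ⟨rfl, rfl, rfl⟩)
              · exact Or.inl ⟨rfl, Or.inl ⟨rfl, rfl⟩⟩
              · exact Or.inl ⟨rfl, Or.inr ⟨rfl, rfl⟩⟩
            · rintro (⟨rfl, ⟨rfl, rfl⟩ | ⟨rfl, rfl⟩⟩ | ⟨h, -⟩)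
              · exact Or.inl ⟨rfl, rfl, rfl⟩
              · exact Or.inr ⟨rfl, rfl, rfl⟩
              · exact absurd h (by simp)
        · -- only i-step
          have hv1 : 1 ≤ i + 1 ∧ i + 1 < j ∧ j ≤ n := by omega
          have covA : (mk true i j ⟨h1,h2,h3⟩ : P2 n) ⋖ mk true (i+1) j hv1 :=
            covby_iff.mpr (Or.inl ⟨rfl, Or.inl ⟨rfl, rfl⟩⟩)
          rw [card_CP_step hn _ hx {mk true (i+1) j hv1} ?_]
          · rw [Finset.sum_singleton, hrk _ covA, cnt_mk_true, cnt_mk_true,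
              G_rec h1 h2 h3 hne, if_pos c1, if_neg c2, add_zero]
          · intro y
            obtain ⟨yb, yi, yj, hy, rfl⟩ := exists_mk y
            rw [Finset.mem_singleton, eq_mk, covby_iff]
            constructor
            · rintro ⟨rfl, rfl, rfl⟩
              exact Or.inl ⟨rfl, Or.inl ⟨rfl, rfl⟩⟩
            · rintro (⟨rfl, ⟨rfl, rfl⟩ | ⟨rfl, rfl⟩⟩ | ⟨h, -⟩)
              · exact ⟨rfl, rfl, rfl⟩
              · exact absurd hy.2.2 (by omega)
              · exact absurd h (by simp)
        · -- only j-step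
          have hv2 : 1 ≤ i ∧ i < j + 1 ∧ j + 1 ≤ n := by omega
          have covB : (mk true i j ⟨h1,h2,h3⟩ : P2 n) ⋖ mk true i (j+1) hv2 :=
            covby_iff.mpr (Or.inl ⟨rfl, Or.inr ⟨rfl, rfl⟩⟩)
          rw [card_CP_step hn _ hx {mk true i (j+1) hv2} ?_]
          · rw [Finset.sum_singleton, hrk _ covB, cnt_mk_true, cnt_mk_true,
              G_rec h1 h2 h3 hne, if_neg c1, if_pos c2, zero_add]
          · intro y
            obtain ⟨yb, yi, yj, hy, rfl⟩ := exists_mk y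
            rw [Finset.mem_singleton, eq_mk, covby_iff]
            constructor
            · rintro ⟨rfl, rfl, rfl⟩
              exact Or.inl ⟨rfl, Or.inr ⟨rfl, rfl⟩⟩
            · rintro (⟨rfl, ⟨rfl, rfl⟩ | ⟨rfl, rfl⟩⟩ | ⟨h, -⟩)
              · exact absurd hy.2.1 (by omega)
              · exact ⟨rfl, rfl, rfl⟩
              · exact absurd h (by simp)
        · exact absurd ⟨by omega, by omega⟩ hne

end Part2

namespace Part2

open P2N

variable {n : ℕ}

lemma mem_flag_of_comparable (F : Flag (P2 n)) (z : P2 n)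
    (h : ∀ w ∈ F, w ≠ z → w ≤ z ∨ z ≤ w) : z ∈ F := by
  have hchain : IsChain (· ≤ ·) (insert z (F : Set (P2 n))) :=
    F.maxChain.1.insert (fun b hb hne => (h b hb (Ne.symm hne)).symm.imp id id)
  have heq := F.maxChain.2 hchain (Set.subset_insert _ _)
  have hz : z ∈ (insert z (F : Set (P2 n))) := Set.mem_insert _ _
  rw [← heq] at hz
  exact hz

lemma flag_top_mem (hn : 2 ≤ n) (F : Flag (P2 n)) : top hn ∈ F :=
  mem_flag_of_comparable F _ (fun w _ _ => Or.inl (le_top hn w))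

lemma flag_bot_mem (hn : 2 ≤ n) (F : Flag (P2 n)) : bot hn ∈ F :=
  mem_flag_of_comparable F _ (fun w _ _ => Or.inr (bot_le hn w))

lemma flag_path (hn : 2 ≤ n) (F : Flag (P2 n)) : ∀ m (x : P2 n), x ∈ F →
    2 * n + 1 - rk x ≤ m →
    ∃ l : List (P2 n), List.Chain (· ⋖ ·) x l ∧
      (x :: l).getLast (List.cons_ne_nil x l) = top hn ∧
      ∀ a, a ∈ x :: l ↔ (a ∈ F ∧ x ≤ a) := by
  intro m
  induction m with
  | zero => intro x _ hm; have := rk_le x; omega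
  | succ m ih =>
    intro x hxF hm
    by_cases hx : x = top hn
    · subst hx
      refine ⟨[], List.Chain.nil, rfl, fun a => ?_⟩
      simp only [List.mem_singleton]
      constructor
      · rintro rfl; exact ⟨hxF, le_rfl⟩
      · rintro ⟨-, ha⟩; exact le_antisymm (le_top hn a) ha |>.symm ▸ rfl
    · -- find the minimal element of F above x
      set S : Set (P2 n) := {y | y ∈ F ∧ x < y} with hS
      have hSne : S.Nonempty := ⟨top hn, flag_top_mem hn F, lt_top hn hx⟩
      obtain ⟨y, hyS, hmin0⟩ := Set.Finite.exists_minimalFor id S (Set.toFinite S) hSne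
      have hmin : ∀ a ∈ S, id a ≤ id y → id y = id a := fun a ha h => le_antisymm (hmin0 ha h) h
      obtain ⟨hyF, hxy⟩ := hyS
      have hcov : x ⋖ y := by
        refine ⟨hxy, fun z hxz hzy => ?_⟩
        have hzF : z ∈ F := by
          apply mem_flag_of_comparable F z
          intro w hwF hwz
          by_cases hwx : w = x
          · exact Or.inl (hwx ▸ hxz.le)
          · rcases F.maxChain.1 hwF hxF hwx with hwx' | hxw'
            · exact Or.inl (hwx'.trans hxz.le)
            · have hxw : x < w := lt_of_le_of_ne hxw' (Ne.symm hwx)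
              by_cases hwy : w = y
              · exact Or.inr (hzy.le.trans (hwy ▸ le_rfl))
              · rcases F.maxChain.1 hwF hyF hwy with hwy' | hyw'
                · have hyw := hmin w ⟨hwF, hxw⟩ hwy'
                  simp only [id] at hyw
                  exact Or.inr (hzy.le.trans (le_of_eq hyw))
                · exact Or.inr (hzy.le.trans hyw')
        have := hmin z ⟨hzF, hxz⟩ hzy.le
        simp only [id] at this
        exact absurd (this ▸ hzy) (lt_irrefl _)
      obtain ⟨l', hc', he', hmem'⟩ := ih y hyF (by have := rk_covby hcov; omega)
      refine ⟨y :: l', List.chain_cons.mpr ⟨hcov, hc'⟩, ?_, fun a => ?_⟩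
      · rw [List.getLast_cons (List.cons_ne_nil y l')]; exact he'
      · constructor
        · intro ha
          rcases List.mem_cons.mp ha with rfl | ha'
          · exact ⟨hxF, le_rfl⟩
          · obtain ⟨haF, hya⟩ := (hmem' a).mp ha'
            exact ⟨haF, hcov.le.trans hya⟩
        · rintro ⟨haF, hxa⟩
          by_cases hax : a = x
          · exact hax ▸ List.mem_cons_self
          · have hxa' : x < a := lt_of_le_of_ne hxa (Ne.symm hax)
            by_cases hay : a = y
            · exact hay ▸ List.mem_cons.mpr (Or.inr (List.mem_cons_self))
            · rcases F.maxChain.1 haF hyF hay with hay' | hya'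
              · have := hmin a ⟨haF, hxa'⟩ hay'
                simp only [id] at this
                exact absurd this.symm hay
              · exact List.mem_cons.mpr (Or.inr ((hmem' a).mpr ⟨haF, hya'⟩))

lemma mem_chain_of_comparable (hn : 2 ≤ n) :
    ∀ (l : List (P2 n)) (a : P2 n), List.Chain (· ⋖ ·) a l →
      (a :: l).getLast (List.cons_ne_nil a l) = top hn →
      ∀ z, a ≤ z → (∀ w ∈ a :: l, z = w ∨ z ≤ w ∨ w ≤ z) → z ∈ a :: l := by
  intro l
  induction l with
  | nil =>
    intro a _ hlast z haz _
    have ha : a = top hn := hlast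
    have : z = a := le_antisymm (by rw [ha]; exact le_top hn z) haz
    simp [this]
  | cons y t ih =>
    intro a hc hlast z haz hcomp
    by_cases hza : z = a
    · simp [hza]
    · have haz' : a < z := lt_of_le_of_ne haz (Ne.symm hza)
      have hcy := (List.chain_cons.mp hc).1
      rcases hcomp y (by simp) with rfl | hzy | hyz
      · simp
      · rcases lt_or_eq_of_le hzy with hlt | heq
        · exact absurd hlt (hcy.2 haz')
        · simp [heq]
      · have hz := ih y (List.chain_cons.mp hc).2
          (by rw [List.getLast_cons (List.cons_ne_nil y t)] at hlast; exact hlast) z hyz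
          (fun w hw => hcomp w (List.mem_cons.mpr (Or.inr hw)))
        exact List.mem_cons.mpr (Or.inr hz)

def toFlag (hn : 2 ≤ n) (p : CP hn (bot hn)) : Flag (P2 n) where
  carrier := {a | a ∈ (bot hn) :: p.1}
  Chain' := by
    have hp := pairwise_of_chain p.2.1
    have hp' : List.Pairwise (fun a b => a ≤ b ∨ b ≤ a) ((bot hn) :: p.1) :=
      hp.imp (fun h => Or.inl h.le)
    intro a ha b hb hab
    exact (haveI : Std.Symm (fun a b : P2 n => a ≤ b ∨ b ≤ a) := ⟨fun _ _ h => h.symm⟩; hp'.forall) ha hb hab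
  max_chain' := by
    intro s hs hsub
    apply Set.Subset.antisymm hsub
    intro z hz
    have hcomp : ∀ w ∈ (bot hn) :: p.1, z = w ∨ z ≤ w ∨ w ≤ z := by
      intro w hw
      by_cases hzw : z = w
      · exact Or.inl hzw
      · rcases hs (hsub hw) hz (fun e => hzw e.symm) with h | h
        · exact Or.inr (Or.inr h)
        · exact Or.inr (Or.inl h)
    exact mem_chain_of_comparable hn p.1 (bot hn) p.2.1 p.2.2 z (bot_le hn z) hcomp

lemma pairwise_ext : ∀ (l1 l2 : List (P2 n)), l1.Pairwise (· < ·) → l2.Pairwise (· < ·) →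
    (∀ a, a ∈ l1 ↔ a ∈ l2) → l1 = l2 := by
  intro l1
  induction l1 with
  | nil =>
    rintro (_ | ⟨b, t2⟩) _ _ h
    · rfl
    · exact absurd ((h b).mpr (List.mem_cons_self)) List.not_mem_nil
  | cons a t ih =>
    rintro (_ | ⟨b, t2⟩) hp1 hp2 h
    · exact absurd ((h a).mp (List.mem_cons_self)) List.not_mem_nil
    · have hab : a = b := by
        rcases List.mem_cons.mp ((h a).mp (List.mem_cons_self)) with rfl | hat2
        · rfl
        · have hba : b < a := List.rel_of_pairwise_cons hp2 hat2
          rcases List.mem_cons.mp ((h b).mpr (List.mem_cons_self)) with rfl | hbt1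
          · exact absurd hba (lt_irrefl _)
          · exact absurd (hba.trans (List.rel_of_pairwise_cons hp1 hbt1)) (lt_irrefl _)
      subst hab
      have htails : ∀ c, c ∈ t ↔ c ∈ t2 := by
        intro c
        constructor
        · intro hc
          have hac : a < c := List.rel_of_pairwise_cons hp1 hc
          rcases List.mem_cons.mp ((h c).mp (List.mem_cons.mpr (Or.inr hc))) with rfl | h2
          · exact absurd hac (lt_irrefl _)
          · exact h2
        · intro hc
          have hac : a < c := List.rel_of_pairwise_cons hp2 hc
          rcases List.mem_cons.mp ((h c).mpr (List.mem_cons.mpr (Or.inr hc))) with rfl | h2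
          · exact absurd hac (lt_irrefl _)
          · exact h2
      rw [ih t2 (List.pairwise_cons.mp hp1).2 (List.pairwise_cons.mp hp2).2 htails]

lemma toFlag_bijective (hn : 2 ≤ n) : Function.Bijective (toFlag hn) := by
  constructor
  · intro p1 p2 h
    have hsets : ∀ a, a ∈ (bot hn) :: p1.1 ↔ a ∈ (bot hn) :: p2.1 := by
      intro a
      have := congrArg (fun F : Flag (P2 n) => a ∈ (F : Set (P2 n))) h
      simpa [toFlag] using this
    have := pairwise_ext _ _ (pairwise_of_chain p1.2.1) (pairwise_of_chain p2.2.1) hsets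
    exact Subtype.ext (List.tail_eq_of_cons_eq this)
  · intro F
    obtain ⟨l, hc, hlast, hmem⟩ :=
      flag_path hn F (2 * n + 1) (bot hn) (flag_bot_mem hn F) (by omega)
    refine ⟨⟨l, hc, hlast⟩, ?_⟩
    apply Flag.ext
    apply Set.ext
    intro a
    show a ∈ (bot hn) :: l ↔ a ∈ F
    rw [hmem a]
    exact ⟨fun h => h.1, fun h => ⟨h, bot_le hn a⟩⟩

end Part2


/-- For `n ≥ 2`, the number of maximal chains of the poset
`P_{2,n}` equals `2·C_{n-1} − 1`, where `C_m` is the `m`-th Catalan number. -/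
theorem numMaxChains_P2 (n : ℕ) (hn : 2 ≤ n) :
    Nat.card (Flag (P2 n)) = 2 * catalan (n - 1) - 1 := by
  rw [← Nat.card_eq_of_bijective _ (Part2.toFlag_bijective hn),
    Part2.card_CP_eq hn (2 * n + 1) _ (by omega)]
  show P2Aux.Fc n 1 2 = _
  exact P2Aux.Fc_final hn
end

section
/- Let n ≥ 2 be an integer. The number of maximal chains of Young's poset Y_n equals the Catalan number C_{n-2}. -/
/-- Young's poset `Y_n`: the set `{(i,j) : 1 ≤ i < j ≤ n}` with componentwise
order `(i,j) ≤ (k,l) ↔ i ≤ k ∧ j ≤ l` (inherited from the product order). -/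
def Young (n : ℕ) : Type :=
  {p : ℕ × ℕ // 1 ≤ p.1 ∧ p.1 < p.2 ∧ p.2 ≤ n}

instance Young.instPartialOrder (n : ℕ) : PartialOrder (Young n) :=
  inferInstanceAs (PartialOrder {p : ℕ × ℕ // 1 ≤ p.1 ∧ p.1 < p.2 ∧ p.2 ≤ n})

namespace YoungAux

open DyckStep List

variable {n : ℕ}

lemma le_iff {x y : Young n} : x ≤ y ↔ x.val.1 ≤ y.val.1 ∧ x.val.2 ≤ y.val.2 := Iff.rfl

lemma yext {x y : Young n} (h1 : x.val.1 = y.val.1) (h2 : x.val.2 = y.val.2) : x = y :=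
  Subtype.ext (Prod.ext h1 h2)

/-- coordinate sum -/
def sc (x : Young n) : ℕ := x.val.1 + x.val.2

lemma sc_def (x : Young n) : sc x = x.val.1 + x.val.2 := rfl

lemma lt_mk {x y : Young n} (h1 : x.val.1 ≤ y.val.1) (h2 : x.val.2 ≤ y.val.2)
    (h3 : x.val.1 + x.val.2 < y.val.1 + y.val.2) : x < y :=
  lt_of_le_of_ne (le_iff.mpr ⟨h1, h2⟩) (fun e => by rw [e] at h3; omega)

lemma lt_of_le_of_sc {x y : Young n} (h : x ≤ y) (hs : sc x < sc y) : x < y :=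
  lt_mk (le_iff.mp h).1 (le_iff.mp h).2 hs

lemma eq_of_le_of_sc {x y : Young n} (h : x ≤ y) (hs : sc y ≤ sc x) : x = y := by
  rw [le_iff] at h; exact yext (by unfold sc at hs; omega) (by unfold sc at hs; omega)

lemma sc_lt_of_lt {x y : Young n} (h : x < y) : sc x < sc y := by
  rcases Nat.lt_or_ge (sc x) (sc y) with h' | h'
  · exact h'
  · exact absurd (eq_of_le_of_sc h.le h') h.ne

lemma interp {a b : Young n} (hab : a ≤ b) (hs : sc a + 2 ≤ sc b) :
    ∃ c : Young n, a < c ∧ c < b := by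
  obtain ⟨⟨i, j⟩, hi, hij, hjn⟩ := a
  obtain ⟨⟨k, l⟩, hk, hkl, hln⟩ := b
  replace hab := le_iff.mp hab
  simp only at hab
  have hs' : i + j + 2 ≤ k + l := hs
  rcases Nat.lt_or_ge j l with hjl | hjl
  · exact ⟨⟨(i, j+1), hi, by omega, by omega⟩,
      lt_mk (le_refl i) (by omega : j ≤ j + 1) (show i + j < i + (j+1) by omega),
      lt_mk hab.1 (by omega : j + 1 ≤ l) (show i + (j+1) < k + l by omega)⟩
  · exact ⟨⟨(i+1, j), by omega, by omega, hjn⟩,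
      lt_mk (by omega : i ≤ i + 1) (le_refl j) (show i + j < i + 1 + j by omega),
      lt_mk (by omega : i + 1 ≤ k) (by omega : j ≤ l) (show i + 1 + j < k + l by omega)⟩

instance : Finite (Young n) := by
  have : Finite {p : ℕ × ℕ // 1 ≤ p.1 ∧ p.1 < p.2 ∧ p.2 ≤ n} := by
    apply Set.Finite.to_subtype (s := {p : ℕ × ℕ | 1 ≤ p.1 ∧ p.1 < p.2 ∧ p.2 ≤ n})
    apply Set.Finite.subset (Set.finite_Iic ((n, n) : ℕ × ℕ))
    rintro ⟨a, b⟩ ⟨h1, h2, h3⟩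
    exact ⟨by simpa using by omega, by simpa using h3⟩
  exact this

section Bounds

variable (hn : 2 ≤ n)

def bo : Young n := ⟨(1, 2), le_refl 1, one_lt_two, hn⟩

def tp : Young n := ⟨(n - 1, n), by omega, by omega, le_refl n⟩

lemma bo_le (x : Young n) : bo hn ≤ x := by
  obtain ⟨⟨i, j⟩, hi, hij, hjn⟩ := x
  exact le_iff.mpr ⟨hi, show 2 ≤ j by omega⟩

lemma le_tp (x : Young n) : x ≤ tp hn := by
  obtain ⟨⟨i, j⟩, hi, hij, hjn⟩ := x
  exact le_iff.mpr ⟨by show i ≤ n - 1; omega, hjn⟩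

lemma sc_bo : sc (bo hn) = 3 := rfl

lemma sc_tp : sc (tp hn) = 2 * n - 1 := by show n - 1 + n = 2 * n - 1; omega

lemma sc_mem (x : Young n) : 3 ≤ sc x ∧ sc x ≤ 2 * n - 1 := by
  obtain ⟨⟨i, j⟩, hi, hij, hjn⟩ := x
  exact ⟨show 3 ≤ i + j by omega, show i + j ≤ 2 * n - 1 by omega⟩

lemma eq_bo_of_sc {x : Young n} (h : sc x = 3) : x = bo hn := by
  obtain ⟨⟨i, j⟩, hi, hij, hjn⟩ := x
  have h' : i + j = 3 := h
  exact yext (show i = 1 by omega) (show j = 2 by omega)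

lemma eq_tp_of_sc {x : Young n} (h : sc x = 2 * n - 1) : x = tp hn := by
  obtain ⟨⟨i, j⟩, hi, hij, hjn⟩ := x
  have h' : i + j = 2 * n - 1 := h
  exact yext (show i = n - 1 by omega) (show j = n by omega)

end Bounds

section FlagLemmas

variable (hn : 2 ≤ n) (F : Flag (Young n))

lemma bo_mem : bo hn ∈ F :=
  Flag.mem_iff_forall_le_or_ge.mpr (fun b _ => Or.inl (bo_le hn b))

lemma tp_mem : tp hn ∈ F :=
  Flag.mem_iff_forall_le_or_ge.mpr (fun b _ => Or.inr (le_tp hn b))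

lemma level_unique {x y : Young n} (hx : x ∈ F) (hy : y ∈ F) (h : sc x = sc y) : x = y := by
  rcases F.le_or_le hx hy with h' | h'
  · exact eq_of_le_of_sc h' h.ge
  · exact (eq_of_le_of_sc h' h.le).symm

lemma exists_succ {x : Young n} (hx : x ∈ F) (hxt : x ≠ tp hn) :
    ∃ y ∈ F, x < y ∧ sc y = sc x + 1 := by
  set S : Set (Young n) := {z | z ∈ F ∧ x < z} with hS
  have hne : S.Nonempty := ⟨tp hn, tp_mem hn F, lt_of_le_of_ne (le_tp hn x) hxt⟩
  obtain ⟨y, hyS, hymin'⟩ := S.toFinite.exists_minimalFor id S hne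
  have hymin : ∀ a' ∈ S, id a' ≤ id y → id y = id a' := fun a' ha' h => le_antisymm (hymin' ha' h) h
  refine ⟨y, hyS.1, hyS.2, ?_⟩
  have h1 : sc x < sc y := sc_lt_of_lt hyS.2
  by_contra hne'
  obtain ⟨c, hxc, hcy⟩ := interp hyS.2.le (by omega)
  have hcF : c ∈ F := by
    rw [Flag.mem_iff_forall_le_or_ge]
    intro b hb
    rcases F.le_or_le hb hx with h' | h'
    · exact Or.inr (h'.trans hxc.le)
    · rcases eq_or_lt_of_le h' with rfl | h''
      · exact Or.inr hxc.le
      · rcases F.le_or_le hb hyS.1 with h3 | h3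
        · have : y = b := hymin b ⟨hb, h''⟩ h3
          exact Or.inl (this ▸ hcy.le)
        · exact Or.inl (hcy.le.trans h3)
  have : y = c := hymin c ⟨hcF, hxc⟩ hcy.le
  exact absurd (this ▸ hcy) (lt_irrefl y)

include hn in
lemma exists_level : ∀ k, k ≤ 2 * n - 4 → ∃ x, x ∈ F ∧ sc x = 3 + k := by
  intro k
  induction k with
  | zero => exact fun _ => ⟨bo hn, bo_mem hn F, sc_bo hn⟩
  | succ k ih =>
    intro hk
    obtain ⟨x, hxF, hxs⟩ := ih (by omega)
    have hxt : x ≠ tp hn := by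
      intro e
      rw [e, sc_tp hn] at hxs
      omega
    obtain ⟨y, hyF, _, hys⟩ := exists_succ hn F hxF hxt
    exact ⟨y, hyF, by omega⟩

end FlagLemmas

end YoungAux

namespace YoungAux
open DyckStep List

lemma count_UD (l : List DyckStep) : l.count U + l.count D = l.length := by
  induction l with
  | nil => simp
  | cons s t ih => cases s <;> simp [count_cons] <;> omega

section PathOfWord

variable {n : ℕ} (hn : 2 ≤ n) (w : DyckWord) (hw : w.semilength = n - 2)

include hn hw in
lemma len_w : w.toList.length = 2 * n - 4 := by
  have := w.two_mul_semilength_eq_length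
  omega

include hw in
lemma countU_le (k : ℕ) : (w.toList.take k).count U ≤ n - 2 := by
  have := (take_sublist k w.toList).count_le U
  rw [← DyckWord.semilength, hw] at this
  exact this

def pathPt (k : ℕ) : Young n :=
  ⟨(1 + (w.toList.take k).count D, 2 + (w.toList.take k).count U),
    by omega,
    by have := w.count_D_le_count_U k; omega,
    by have := countU_le w hw k; omega⟩

lemma pathPt_fst (k : ℕ) : (pathPt hn w hw k).val.1 = 1 + (w.toList.take k).count D := rfl
lemma pathPt_snd (k : ℕ) : (pathPt hn w hw k).val.2 = 2 + (w.toList.take k).count U := rfl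

include hw in
lemma sc_pathPt {k : ℕ} (hk : k ≤ 2 * n - 4) : sc (pathPt hn w hw k) = 3 + k := by
  have h1 : (w.toList.take k).count U + (w.toList.take k).count D = k := by
    rw [count_UD, length_take, len_w hn w hw]
    omega
  show 1 + (w.toList.take k).count D + (2 + (w.toList.take k).count U) = 3 + k
  omega

lemma pathPt_mono {k k' : ℕ} (h : k ≤ k') : pathPt hn w hw k ≤ pathPt hn w hw k' := by
  have hsub : (w.toList.take k).Sublist (w.toList.take k') := by
    have : w.toList.take k = (w.toList.take k').take k := by
      rw [take_take, min_eq_left h]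
    rw [this]
    exact take_sublist _ _
  exact le_iff.mpr ⟨by have := hsub.count_le D; show 1 + _ ≤ 1 + _; omega,
    by have := hsub.count_le U; show 2 + _ ≤ 2 + _; omega⟩

def pathSet : Set (Young n) := {x | ∃ k, k ≤ 2 * n - 4 ∧ x = pathPt hn w hw k}

lemma pathSet_chain : IsChain (· ≤ ·) (pathSet hn w hw) := by
  rintro x ⟨k, hk, rfl⟩ y ⟨k', hk', rfl⟩ hne
  rcases le_total k k' with h | h
  · exact Or.inl (pathPt_mono hn w hw h)
  · exact Or.inr (pathPt_mono hn w hw h)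

lemma pathSet_max : ∀ ⦃s : Set (Young n)⦄, IsChain (· ≤ ·) s → pathSet hn w hw ⊆ s →
    pathSet hn w hw = s := by
  intro s hs hsub
  refine Set.Subset.antisymm hsub (fun x hx => ?_)
  obtain ⟨h3, h2n⟩ := sc_mem x
  obtain ⟨k0, hk1, hk2⟩ : ∃ k0, k0 ≤ 2 * n - 4 ∧ sc x = 3 + k0 := ⟨sc x - 3, by omega, by omega⟩
  have hp : pathPt hn w hw k0 ∈ s := hsub ⟨k0, hk1, rfl⟩
  have hsc : sc (pathPt hn w hw k0) = sc x := by rw [sc_pathPt hn w hw hk1]; omega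
  rcases eq_or_ne x (pathPt hn w hw k0) with h | hne
  · exact ⟨k0, hk1, h⟩
  · rcases hs hx hp hne with h | h
    · exact ⟨k0, hk1, eq_of_le_of_sc h (by omega)⟩
    · exact ⟨k0, hk1, (eq_of_le_of_sc h (by omega)).symm⟩

def flagOf : Flag (Young n) := ⟨pathSet hn w hw, pathSet_chain hn w hw, pathSet_max hn w hw⟩

end PathOfWord

end YoungAux

namespace YoungAux
open DyckStep List

lemma count_take_succ (l : List DyckStep) (k : ℕ) (hk : k < l.length) (s : DyckStep) :
    (l.take (k+1)).count s = (l.take k).count s + if l[k] = s then 1 else 0 := by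
  rw [take_succ, getElem?_eq_getElem hk]
  simp only [Option.toList_some, count_append, count_singleton']

variable {n : ℕ} (hn : 2 ≤ n)

lemma flagOf_inj (w w' : DyckWord) (hw : w.semilength = n - 2) (hw' : w'.semilength = n - 2)
    (h : flagOf hn w hw = flagOf hn w' hw') : w = w' := by
  have hset : pathSet hn w hw = pathSet hn w' hw' := congrArg Flag.carrier h
  have key : ∀ k, k ≤ 2 * n - 4 →
      (w.toList.take k).count U = (w'.toList.take k).count U := by
    intro k hk
    have hmem : pathPt hn w hw k ∈ pathSet hn w' hw' := by rw [← hset]; exact ⟨k, hk, rfl⟩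
    obtain ⟨k', hk', he⟩ := hmem
    have hsc : (3:ℕ) + k = 3 + k' := by
      rw [← sc_pathPt hn w hw hk, he, sc_pathPt hn w' hw' hk']
    obtain rfl : k = k' := by omega
    have h2 : 2 + (w.toList.take k).count U = 2 + (w'.toList.take k).count U :=
      congrArg (fun x : Young n => x.val.2) he
    omega
  rw [DyckWord.ext_iff]
  apply List.ext_getElem (by rw [len_w hn w hw, len_w hn w' hw'])
  intro k h1 h2
  have hk1 : k + 1 ≤ 2 * n - 4 := by rw [len_w hn w hw] at h1; omega
  have e1 := count_take_succ w.toList k h1 U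
  have e2 := count_take_succ w'.toList k h2 U
  have c1 := key (k+1) hk1
  have c0 := key k (by omega)
  rcases (w.toList[k]'h1).dichotomy with h | h <;>
    rcases (w'.toList[k]'h2).dichotomy with h' | h' <;>
    rw [h, h'] <;> rw [h] at e1 <;> rw [h'] at e2 <;> simp at e1 e2 <;> omega

end YoungAux

namespace YoungAux
open DyckStep List

variable {n : ℕ} (hn : 2 ≤ n)

lemma lt_of_sc_lt (F : Flag (Young n)) {x y : Young n} (hx : x ∈ F) (hy : y ∈ F)
    (h : sc x < sc y) : x < y := by
  rcases F.le_or_le hx hy with h' | h'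
  · exact lt_of_le_of_sc h' h
  · have he := eq_of_le_of_sc h' h.le
    rw [he] at h
    exact absurd h (lt_irrefl _)

lemma flagOf_surj (F : Flag (Young n)) :
    ∃ (w : DyckWord) (hw : w.semilength = n - 2), flagOf hn w hw = F := by
  have H : ∀ k : ℕ, ∃ x, x ∈ F ∧ sc x = 3 + min k (2 * n - 4) :=
    fun k => exists_level hn F _ (min_le_right _ _)
  choose p hpF hps using H
  have hps' : ∀ k, k ≤ 2 * n - 4 → sc (p k) = 3 + k := fun k hk => by
    rw [hps k, min_eq_left hk]
  have hprop : ∀ k, 1 ≤ (p k).val.1 ∧ (p k).val.1 < (p k).val.2 ∧ (p k).val.2 ≤ n :=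
    fun k => (p k).prop
  have hstep : ∀ k, k < 2 * n - 4 →
      ((p (k+1)).val.1 = (p k).val.1 ∧ (p (k+1)).val.2 = (p k).val.2 + 1) ∨
      ((p (k+1)).val.1 = (p k).val.1 + 1 ∧ (p (k+1)).val.2 = (p k).val.2) := by
    intro k hk
    have hlt : p k < p (k+1) := lt_of_sc_lt F (hpF k) (hpF (k+1))
      (by rw [hps' k (by omega), hps' (k+1) (by omega)]; omega)
    have hle := le_iff.mp hlt.le
    have h1 := hps' k (by omega)
    have h2 := hps' (k+1) (by omega)
    rw [sc_def] at h1 h2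
    omega
  set f : ℕ → DyckStep := fun k => if (p (k+1)).val.2 = (p k).val.2 + 1 then U else D with hf
  set L : List DyckStep := (List.range (2 * n - 4)).map f with hL
  have hLlen : L.length = 2 * n - 4 := by rw [hL, length_map, length_range]
  have hp0 : (p 0).val.1 = 1 ∧ (p 0).val.2 = 2 := by
    have h := eq_bo_of_sc hn (hps' 0 (by omega))
    rw [h]; exact ⟨rfl, rfl⟩
  have hcount : ∀ j, j ≤ 2 * n - 4 →
      (L.take j).count U = (p j).val.2 - 2 ∧ (L.take j).count D = (p j).val.1 - 1 := by
    intro j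
    induction j with
    | zero => intro _; constructor <;> simp <;> omega
    | succ j ih =>
      intro hj
      obtain ⟨iU, iD⟩ := ih (by omega)
      have htake : L.take (j+1) = L.take j ++ [f j] := by
        rw [take_succ, getElem?_eq_getElem (by omega : j < L.length)]
        simp only [hL, getElem_map, getElem_range, Option.toList_some]
      have hpj := hprop j
      have hpj1 := hprop (j+1)
      rcases hstep j (by omega) with ⟨e1, e2⟩ | ⟨e1, e2⟩
      · have hfj : f j = U := by rw [hf]; exact if_pos e2
        rw [htake, count_append, count_append, hfj]
        simp only [count_singleton']
        constructor <;> simp <;> omega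
      · have hfj : f j = D := by rw [hf]; exact if_neg (by omega)
        rw [htake, count_append, count_append, hfj]
        simp only [count_singleton']
        constructor <;> simp <;> omega
  have htp1 : (tp hn : Young n).val.1 = n - 1 := rfl
  have htp2 : (tp hn : Young n).val.2 = n := rfl
  have hfullU : L.count U = n - 2 ∧ L.count D = n - 2 := by
    have hc := hcount (2*n-4) le_rfl
    rw [take_of_length_le (le_of_eq hLlen)] at hc
    have htp := eq_tp_of_sc hn (x := p (2*n-4)) (by rw [hps' _ le_rfl]; omega)
    rw [htp, htp1, htp2] at hc
    omega
  have hUD : L.count U = L.count D := by omega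
  have hpre : ∀ i, (L.take i).count D ≤ (L.take i).count U := by
    intro i
    have hmin : L.take i = L.take (min i (2*n-4)) := by
      rcases le_total i (2*n-4) with h | h
      · rw [min_eq_left h]
      · rw [min_eq_right h, take_of_length_le (by omega), take_of_length_le (by omega)]
    rw [hmin]
    obtain ⟨cU, cD⟩ := hcount (min i (2*n-4)) (min_le_right _ _)
    rw [cU, cD]
    have := hprop (min i (2*n-4))
    omega
  set w : DyckWord := ⟨L, hUD, hpre⟩ with hwdef
  have hsemi : w.semilength = n - 2 := hfullU.1
  have hPP : ∀ k, k ≤ 2*n-4 → pathPt hn w hsemi k = p k := by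
    intro k hk
    obtain ⟨cU, cD⟩ := hcount k hk
    have hpk := hprop k
    refine yext ?_ ?_
    · show 1 + (L.take k).count D = (p k).val.1
      omega
    · show 2 + (L.take k).count U = (p k).val.2
      omega
  refine ⟨w, hsemi, Flag.ext ?_⟩
  show pathSet hn w hsemi = (F : Set (Young n))
  ext x
  constructor
  · rintro ⟨k, hk, rfl⟩
    rw [hPP k hk]
    exact hpF k
  · intro hx
    obtain ⟨h3, h2n⟩ := sc_mem x
    refine ⟨sc x - 3, by omega, ?_⟩
    have hxp : x = p (sc x - 3) :=
      level_unique F hx (hpF _) (by rw [hps' _ (by omega)]; omega)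
    rw [hPP _ (by omega)]
    exact hxp

end YoungAux

/-- For `n ≥ 2`, the number of maximal chains of Young's poset
`Y_n` equals the Catalan number `C_{n-2}`. -/
theorem numMaxChains_Young (n : ℕ) (hn : 2 ≤ n) :
    Nat.card (Flag (Young n)) = catalan (n - 2) := by
  have hbij : Function.Bijective
      (fun w : {w : DyckWord // w.semilength = n - 2} => YoungAux.flagOf hn w.1 w.2) := by
    constructor
    · intro w w' h
      exact Subtype.ext (YoungAux.flagOf_inj hn w.1 w'.1 w.2 w'.2 h)
    · intro F
      obtain ⟨w, hw, h⟩ := YoungAux.flagOf_surj hn F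
      exact ⟨⟨w, hw⟩, h⟩
  rw [← Nat.card_eq_of_bijective _ hbij, Nat.card_eq_fintype_card,
    DyckWord.card_dyckWord_semilength_eq_catalan]
end

section
/- Let n ≥ 2 be an integer. The number of maximal chains C of the poset P_{2,n} for which there exists an index j with 1 < j ≤ n such that both (false,(1,j)) ∈ C and (true,(1,j)) ∈ C equals the Catalan number C_{n-1}. -/
/-- Monotone sequences `c : Fin a → ℕ` with `i+2 ≤ c i ≤ b`. -/
def Sset (a b : ℕ) : Finset (Fin a → ℕ) :=
  (Fintype.piFinset fun _ : Fin a => Finset.range (b+1)).filter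
    (fun c => Monotone c ∧ ∀ i : Fin a, (i : ℕ) + 2 ≤ c i)

lemma mem_Sset {a b : ℕ} {c : Fin a → ℕ} :
    c ∈ Sset a b ↔ Monotone c ∧ ∀ i : Fin a, (i : ℕ) + 2 ≤ c i ∧ c i ≤ b := by
  simp only [Sset, Finset.mem_filter, Fintype.mem_piFinset, Finset.mem_range,
    Nat.lt_succ_iff, forall_and]
  tauto

lemma Sset_card_zero (b : ℕ) : (Sset 0 b).card = 1 := by
  apply Finset.card_eq_one.mpr
  refine ⟨fun i => i.elim0, ?_⟩
  ext c
  simp only [Finset.mem_singleton, mem_Sset]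
  constructor
  · intro _; funext i; exact i.elim0
  · rintro rfl
    exact ⟨fun i j _ => le_rfl, fun i => i.elim0⟩

lemma Sset_eq_empty {a b : ℕ} (ha : 1 ≤ a) (hb : b ≤ a) : Sset a b = ∅ := by
  ext c
  simp only [mem_Sset, Finset.notMem_empty, iff_false, not_and]
  intro _ h
  obtain ⟨i, hi⟩ : ∃ i : Fin a, (i : ℕ) = a - 1 := ⟨⟨a - 1, by omega⟩, rfl⟩
  have h1 := (h i).1
  have h2 := (h i).2
  omega

lemma snoc_mono {a b : ℕ} {d : Fin a → ℕ} (hd : Monotone d) (hb : ∀ i, d i ≤ b) :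
    Monotone (Fin.snoc d b : Fin (a+1) → ℕ) := by
  intro i j hij
  rcases Fin.eq_castSucc_or_eq_last i with ⟨i', rfl⟩ | rfl
  · rcases Fin.eq_castSucc_or_eq_last j with ⟨j', rfl⟩ | rfl
    · rw [Fin.snoc_castSucc, Fin.snoc_castSucc]
      exact hd (by exact_mod_cast hij)
    · rw [Fin.snoc_castSucc, Fin.snoc_last]; exact hb i'
  · rcases Fin.eq_castSucc_or_eq_last j with ⟨j', rfl⟩ | rfl
    · exfalso
      have h1 : (Fin.last a : Fin (a+1)) ≤ j'.castSucc := hij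
      have h2 := Fin.castSucc_lt_last j'
      exact absurd h1 (not_le.mpr h2)
    · simp

lemma Sset_card_succ (a b : ℕ) (h : a + 2 ≤ b) :
    (Sset (a+1) b).card = (Sset a b).card + (Sset (a+1) (b-1)).card := by
  classical
  rw [← Finset.card_filter_add_card_filter_not
    (p := fun c => c (Fin.last a) = b) (s := Sset (a+1) b)]
  congr 1
  · -- filter (c last = b) has card = card (Sset a b)
    apply Finset.card_bij' (i := fun c _ => c ∘ Fin.castSucc)
      (j := fun d _ => Fin.snoc d b)
    · intro c hc
      simp only [Finset.mem_filter, mem_Sset] at hc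
      obtain ⟨⟨hmono, hbd⟩, _⟩ := hc
      refine mem_Sset.mpr ⟨fun i j hij => hmono (by exact_mod_cast hij), fun i => ?_⟩
      exact ⟨(hbd i.castSucc).1, (hbd i.castSucc).2⟩
    · intro d hd
      simp only [mem_Sset] at hd
      obtain ⟨hmono, hbd⟩ := hd
      refine Finset.mem_filter.mpr ⟨mem_Sset.mpr ⟨snoc_mono hmono (fun i => (hbd i).2), ?_⟩,
        by simp⟩
      intro i
      rcases Fin.eq_castSucc_or_eq_last i with ⟨i', rfl⟩ | rfl
      · simpa using ⟨(hbd i').1, (hbd i').2⟩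
      · simp only [Fin.snoc_last, Fin.val_last]
        omega
    · intro c hc
      simp only [Finset.mem_filter] at hc
      funext i
      rcases Fin.eq_castSucc_or_eq_last i with ⟨i', rfl⟩ | rfl
      · simp
      · simp [hc.2]
    · intro d _
      funext i
      simp
  · -- filter (c last ≠ b) = Sset (a+1) (b-1)
    congr 1
    ext c
    simp only [Finset.mem_filter, mem_Sset]
    constructor
    · rintro ⟨⟨hmono, hbd⟩, hne⟩
      refine ⟨hmono, fun i => ⟨(hbd i).1, ?_⟩⟩
      have h1 := (hbd (Fin.last a)).2
      have h2 : c i ≤ c (Fin.last a) := hmono (Fin.le_last i)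
      omega
    · rintro ⟨hmono, hbd⟩
      refine ⟨⟨hmono, fun i => ⟨(hbd i).1, by have := (hbd i).2; omega⟩⟩, ?_⟩
      have := (hbd (Fin.last a)).2
      omega

lemma Sset_card_one (b : ℕ) (hb : 1 ≤ b) : (Sset 1 b).card = b - 1 := by
  rw [show b - 1 = (Finset.Icc 2 b).card by rw [Nat.card_Icc]; omega]
  refine Finset.card_bij' (fun c _ => c 0) (fun v _ => fun _ => v) ?_ ?_ ?_ ?_
  · intro c hc
    rw [mem_Sset] at hc
    have h1 := (hc.2 0).1
    have h2 := (hc.2 0).2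
    simp only [Finset.mem_Icc]
    simp only [Fin.val_zero] at h1
    omega
  · intro v hv
    simp only [Finset.mem_Icc] at hv
    refine mem_Sset.mpr ⟨monotone_const, fun i => ?_⟩
    show (i : ℕ) + 2 ≤ v ∧ v ≤ b
    have : (i : ℕ) = 0 := by omega
    omega
  · intro c _
    funext i
    have : i = 0 := Subsingleton.elim _ _
    rw [this]
  · intro v _
    rfl

lemma Sset_key : ∀ s a b : ℕ, a + b = s → 1 ≤ a → a ≤ b →
    (Sset a b).card + (a + b - 1).choose (a - 1) = (a + b - 1).choose a := by
  intro s
  induction s using Nat.strong_induction_on with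
  | _ s IH =>
    intro a b hs ha hab
    rcases Nat.lt_or_ge a 2 with ha2 | ha2
    · -- a = 1
      have : a = 1 := by omega
      subst this
      rw [Sset_card_one b (by omega)]
      rw [show 1 + b - 1 = b by omega, show (1:ℕ) - 1 = 0 by omega,
        Nat.choose_zero_right, Nat.choose_one_right]
      omega
    · rcases Nat.eq_or_lt_of_le hab with hba | hba
      · -- b = a
        subst hba
        rw [Sset_eq_empty (by omega) le_rfl, Finset.card_empty, Nat.zero_add]
        have hsym := Nat.choose_symm (show a ≤ a + a - 1 by omega)
        rw [show a + a - 1 - a = a - 1 by omega] at hsym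
        exact hsym
      · -- a ≥ 2, b ≥ a + 1
        obtain ⟨a', rfl⟩ : ∃ a', a = a' + 1 := ⟨a - 1, by omega⟩
        have ha1 : 1 ≤ a' := by omega
        have hrec := Sset_card_succ a' b (by omega)
        have ih1 := IH (a' + b) (by omega) a' b rfl (by omega) (by omega)
        have ih2 := IH (a' + 1 + (b - 1)) (by omega) (a' + 1) (b - 1) rfl (by omega) (by omega)
        rw [show a' + 1 + (b - 1) - 1 = a' + b - 1 by omega] at ih2
        obtain ⟨a'', rfl⟩ : ∃ a'', a' = a'' + 1 := ⟨a' - 1, by omega⟩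
        have hp1 : (a'' + 1 + 1 + b - 1).choose (a'' + 1 + 1) =
            (a'' + 1 + b - 1).choose (a'' + 1) + (a'' + 1 + b - 1).choose (a'' + 1 + 1) := by
          rw [show a'' + 1 + 1 + b - 1 = (a'' + 1 + b - 1) + 1 by omega]
          exact Nat.choose_succ_succ _ _
        have hp2 : (a'' + 1 + 1 + b - 1).choose (a'' + 1) =
            (a'' + 1 + b - 1).choose a'' + (a'' + 1 + b - 1).choose (a'' + 1) := by
          rw [show a'' + 1 + 1 + b - 1 = (a'' + 1 + b - 1) + 1 by omega]
          exact Nat.choose_succ_succ _ _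
        simp only [show a'' + 1 + 1 - 1 = a'' + 1 by omega,
          show a'' + 1 - 1 = a'' by omega] at *
        omega

lemma Sset_card_catalan (m : ℕ) (hm : 1 ≤ m) : (Sset m (m + 1)).card = catalan m := by
  have hkey := Sset_key (m + (m + 1)) m (m + 1) rfl hm (by omega)
  rw [show m + (m + 1) - 1 = 2 * m by omega] at hkey
  have hcc : (2 * m).choose m * m = (2 * m).choose (m - 1) * (m + 1) := by
    have h := Nat.choose_succ_right_eq (2 * m) (m - 1)
    rw [show m - 1 + 1 = m by omega, show 2 * m - (m - 1) = m + 1 by omega] at h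
    exact h
  have hcb : (m + 1) * catalan m = (2 * m).choose m := succ_mul_catalan_eq_centralBinom m
  have : (m + 1) * (Sset m (m + 1)).card = (m + 1) * catalan m := by
    rw [hcb]
    nlinarith [hkey, hcc]
  exact Nat.eq_of_mul_eq_mul_left (by omega) this
-- poset part: appended after head + count

/-- Extension of a sequence `c : Fin (n-1) → ℕ` to `ℕ`, with `cv n c i = c (i-1)`
for `1 ≤ i ≤ n-1` and `n` beyond. -/
def cv (n : ℕ) (c : Fin (n - 1) → ℕ) (i : ℕ) : ℕ :=
  if h : i - 1 < n - 1 then c ⟨i - 1, h⟩ else n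

section CV

variable {n : ℕ} {c : Fin (n - 1) → ℕ}

lemma cv_mono (hm : Monotone c) (hb : ∀ i : Fin (n - 1), c i ≤ n) :
    ∀ i j, i ≤ j → cv n c i ≤ cv n c j := by
  intro i j hij
  unfold cv
  by_cases h1 : i - 1 < n - 1
  · by_cases h2 : j - 1 < n - 1
    · rw [dif_pos h1, dif_pos h2]
      exact hm (show (⟨i - 1, h1⟩ : Fin (n - 1)) ≤ ⟨j - 1, h2⟩ from by
        simp only [Fin.mk_le_mk]; omega)
    · rw [dif_pos h1, dif_neg h2]
      exact hb _
  · have h2 : ¬ (j - 1 < n - 1) := by omega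
    rw [dif_neg h1, dif_neg h2]

lemma cv_lb (hc2 : ∀ i : Fin (n - 1), (i : ℕ) + 2 ≤ c i) :
    ∀ i, 1 ≤ i → i ≤ n - 1 → i + 1 ≤ cv n c i := by
  intro i h1 h2
  unfold cv
  rw [dif_pos (show i - 1 < n - 1 by omega)]
  have := hc2 ⟨i - 1, by omega⟩
  simp only at this
  omega

lemma cv_le_n (hb : ∀ i : Fin (n - 1), c i ≤ n) : ∀ i, cv n c i ≤ n := by
  intro i
  unfold cv
  by_cases h : i - 1 < n - 1
  · rw [dif_pos h]; exact hb _
  · rw [dif_neg h]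

lemma cv_big {i : ℕ} (hi : n ≤ i) : cv n c i = n := by
  unfold cv
  rw [dif_neg (by omega)]

end CV

/-- The carrier set of the maximal chain attached to a sequence `c`. -/
def Cset (n : ℕ) (c : Fin (n - 1) → ℕ) : Set (P2 n) :=
  {p | (p.1.1 = false ∧ p.1.2.1 = 1 ∧ p.1.2.2 ≤ cv n c 1) ∨
       (p.1.1 = true ∧ cv n c p.1.2.1 ≤ p.1.2.2 ∧ p.1.2.2 ≤ cv n c (p.1.2.1 + 1))}

section Chain

variable {n : ℕ} {c : Fin (n - 1) → ℕ} (hn : 2 ≤ n) (hc : c ∈ Sset (n - 1) n)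

include hc in
lemma Cset_chain : IsChain (· ≤ ·) (Cset n c) := by
  obtain ⟨hm, hbd⟩ := mem_Sset.mp hc
  have hmono := cv_mono hm (fun i => (hbd i).2)
  rintro ⟨⟨pb, pi, pj⟩, hpv⟩ hp ⟨⟨qb, qi, qj⟩, hqv⟩ hq hne
  have hv1 : 1 ≤ pi := hpv.1
  have hv2 : pi < pj := hpv.2.1
  have hw1 : 1 ≤ qi := hqv.1
  have hw2 : qi < qj := hqv.2.1
  have hp' : (pb = false ∧ pi = 1 ∧ pj ≤ cv n c 1) ∨
      (pb = true ∧ cv n c pi ≤ pj ∧ pj ≤ cv n c (pi + 1)) := hp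
  have hq' : (qb = false ∧ qi = 1 ∧ qj ≤ cv n c 1) ∨
      (qb = true ∧ cv n c qi ≤ qj ∧ qj ≤ cv n c (qi + 1)) := hq
  rcases hp' with ⟨hb1, hp1, hp2⟩ | ⟨hb1, hp1, hp2⟩ <;>
    rcases hq' with ⟨hb2, hq1, hq2⟩ | ⟨hb2, hq1, hq2⟩ <;> subst hb1 <;> subst hb2
  · -- false, false
    rcases le_total pj qj with h | h
    · exact Or.inl (Or.inl ⟨rfl, show pi ≤ qi by omega, show pj ≤ qj from h⟩)
    · exact Or.inr (Or.inl ⟨rfl, show qi ≤ pi by omega, show qj ≤ pj from h⟩)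
  · -- false, true
    refine Or.inl (Or.inr ⟨rfl, rfl, Or.inl ⟨show pi = 1 from hp1, show pj ≤ qj from ?_⟩⟩)
    calc pj ≤ cv n c 1 := hp2
    _ ≤ cv n c qi := hmono 1 qi (by omega)
    _ ≤ qj := hq1
  · -- true, false
    refine Or.inr (Or.inr ⟨rfl, rfl, Or.inl ⟨show qi = 1 from hq1, show qj ≤ pj from ?_⟩⟩)
    calc qj ≤ cv n c 1 := hq2
    _ ≤ cv n c pi := hmono 1 pi (by omega)
    _ ≤ pj := hp1
  · -- true, true
    rcases lt_trichotomy pi qi with h | h | h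
    · refine Or.inl (Or.inl ⟨rfl, show pi ≤ qi by omega, show pj ≤ qj from ?_⟩)
      calc pj ≤ cv n c (pi + 1) := hp2
      _ ≤ cv n c qi := hmono (pi + 1) qi (by omega)
      _ ≤ qj := hq1
    · subst h
      rcases le_total pj qj with h | h
      · exact Or.inl (Or.inl ⟨rfl, show pi ≤ pi from le_rfl, show pj ≤ qj from h⟩)
      · exact Or.inr (Or.inl ⟨rfl, show pi ≤ pi from le_rfl, show qj ≤ pj from h⟩)
    · refine Or.inr (Or.inl ⟨rfl, show qi ≤ pi by omega, show qj ≤ pj from ?_⟩)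
      calc qj ≤ cv n c (qi + 1) := hq2
      _ ≤ cv n c pi := hmono (qi + 1) pi (by omega)
      _ ≤ pj := hp1

include hn hc in
lemma Cset_max : ∀ p : P2 n, (∀ q ∈ Cset n c, p ≤ q ∨ q ≤ p) → p ∈ Cset n c := by
  obtain ⟨hm, hbd⟩ := mem_Sset.mp hc
  have hmono := cv_mono hm (fun i => (hbd i).2)
  have hlow := cv_lb (fun i => (hbd i).1)
  have hhigh := cv_le_n (n := n) (c := c) (fun i => (hbd i).2)
  have hcv2 : 2 ≤ cv n c 1 := hlow 1 (by omega) (by omega)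
  -- membership of the canonical elements
  have m1 : (⟨(false, 1, cv n c 1),
      ⟨le_rfl, (by omega : (1:ℕ) < cv n c 1), hhigh 1⟩⟩ : P2 n) ∈ Cset n c :=
    Or.inl ⟨rfl, rfl, le_rfl⟩
  have m2 : (⟨(true, 1, cv n c 1),
      ⟨le_rfl, (by omega : (1:ℕ) < cv n c 1), hhigh 1⟩⟩ : P2 n) ∈ Cset n c :=
    Or.inr ⟨rfl, le_rfl, hmono 1 2 (by omega)⟩
  have m3 : ∀ i (h1 : 1 ≤ i) (h2 : i ≤ n - 1),
      (⟨(true, i, cv n c i),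
        ⟨h1, (by have := hlow i h1 h2; omega : i < cv n c i), hhigh i⟩⟩ : P2 n)
        ∈ Cset n c :=
    fun i h1 h2 => Or.inr ⟨rfl, le_rfl, hmono i (i + 1) (by omega)⟩
  rintro ⟨⟨pb, pi, pj⟩, hpv⟩ hcomp
  have hv1 : 1 ≤ pi := hpv.1
  have hv2 : pi < pj := hpv.2.1
  have hv3 : pj ≤ n := hpv.2.2
  show (pb = false ∧ pi = 1 ∧ pj ≤ cv n c 1) ∨
      (pb = true ∧ cv n c pi ≤ pj ∧ pj ≤ cv n c (pi + 1))
  cases pb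
  · -- pb = false: compare with m2
    rcases hcomp _ m2 with h | h
    · have h' : (false = true ∧ pi ≤ 1 ∧ pj ≤ cv n c 1) ∨
          (false = false ∧ true = true ∧
            ((pi = 1 ∧ pj ≤ cv n c 1) ∨ (pi ≤ 1 ∧ cv n c 1 = n))) := h
      rcases h' with ⟨h, -⟩ | ⟨-, -, hd⟩
      · exact absurd h (by decide)
      · rcases hd with ⟨h1, h2⟩ | ⟨h1, h2⟩
        · exact Or.inl ⟨rfl, h1, h2⟩
        · exact Or.inl ⟨rfl, by omega, by omega⟩
    · have h' : (true = false ∧ 1 ≤ pi ∧ cv n c 1 ≤ pj) ∨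
          (true = false ∧ false = true ∧
            ((1 = 1 ∧ cv n c 1 ≤ pj) ∨ (1 ≤ pi ∧ pj = n))) := h
      rcases h' with ⟨h, -⟩ | ⟨h, -⟩ <;> exact absurd h (by decide)
  · -- pb = true
    have hpin : pi ≤ n - 1 := by omega
    have hl : cv n c pi ≤ pj := by
      by_contra hl
      push_neg at hl
      rcases Nat.lt_or_ge pi 2 with hpi1 | hpi2
      · -- pi = 1 : compare with m1
        have hpi : pi = 1 := by omega
        subst hpi
        rcases hcomp _ m1 with h | h
        · have h' : (true = false ∧ 1 ≤ 1 ∧ pj ≤ cv n c 1) ∨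
              (true = false ∧ false = true ∧
                ((1 = 1 ∧ pj ≤ cv n c 1) ∨ (1 ≤ 1 ∧ cv n c 1 = n))) := h
          rcases h' with ⟨h, -⟩ | ⟨h, -⟩ <;> exact absurd h (by decide)
        · have h' : (false = true ∧ 1 ≤ 1 ∧ cv n c 1 ≤ pj) ∨
              (false = false ∧ true = true ∧
                ((1 = 1 ∧ cv n c 1 ≤ pj) ∨ (1 ≤ 1 ∧ pj = n))) := h
          rcases h' with ⟨h, -⟩ | ⟨-, -, hd⟩
          · exact absurd h (by decide)
          · have hch1 : cv n c 1 ≤ n := hhigh 1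
            rcases hd with ⟨-, h2⟩ | ⟨-, h2⟩ <;> omega
      · -- pi ≥ 2 : compare with (true, pi-1, cv pi)
        have hvq : 1 ≤ pi - 1 ∧ pi - 1 < cv n c pi ∧ cv n c pi ≤ n := by
          have := hlow pi (by omega) hpin
          refine ⟨by omega, by omega, hhigh pi⟩
        have hq : (⟨(true, pi - 1, cv n c pi), hvq⟩ : P2 n) ∈ Cset n c := by
          refine Or.inr ⟨rfl, hmono (pi - 1) pi (by omega), ?_⟩
          show cv n c pi ≤ cv n c (pi - 1 + 1)
          rw [show pi - 1 + 1 = pi by omega]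
        rcases hcomp _ hq with h | h
        · have h' : (true = true ∧ pi ≤ pi - 1 ∧ pj ≤ cv n c pi) ∨
              (true = false ∧ true = true ∧
                ((pi = 1 ∧ pj ≤ cv n c pi) ∨ (pi ≤ pi - 1 ∧ cv n c pi = n))) := h
          rcases h' with ⟨-, h1, -⟩ | ⟨h, -⟩
          · omega
          · exact absurd h (by decide)
        · have h' : (true = true ∧ pi - 1 ≤ pi ∧ cv n c pi ≤ pj) ∨
              (true = false ∧ true = true ∧
                ((pi - 1 = 1 ∧ cv n c pi ≤ pj) ∨ (pi - 1 ≤ pi ∧ pj = n))) := h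
          rcases h' with ⟨-, -, h1⟩ | ⟨h, -⟩
          · omega
          · exact absurd h (by decide)
    have hu : pj ≤ cv n c (pi + 1) := by
      rcases Nat.lt_or_ge (pi + 1) n with hpi1 | hpi2
      · by_contra hu
        push_neg at hu
        rcases hcomp _ (m3 (pi + 1) (by omega) (by omega)) with h | h
        · have h' : (true = true ∧ pi ≤ pi + 1 ∧ pj ≤ cv n c (pi + 1)) ∨
              (true = false ∧ true = true ∧
                ((pi = 1 ∧ pj ≤ cv n c (pi + 1)) ∨
                  (pi ≤ pi + 1 ∧ cv n c (pi + 1) = n))) := h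
          rcases h' with ⟨-, -, h1⟩ | ⟨h, -⟩
          · omega
          · exact absurd h (by decide)
        · have h' : (true = true ∧ pi + 1 ≤ pi ∧ cv n c (pi + 1) ≤ pj) ∨
              (true = false ∧ true = true ∧
                ((pi + 1 = 1 ∧ cv n c (pi + 1) ≤ pj) ∨ (pi + 1 ≤ pi ∧ pj = n))) := h
          rcases h' with ⟨-, h1, -⟩ | ⟨h, -⟩
          · omega
          · exact absurd h (by decide)
      · rw [cv_big (by omega)]
        omega
    exact Or.inr ⟨rfl, hl, hu⟩

include hn hc in
lemma Cset_isMaxChain : IsMaxChain (· ≤ ·) (Cset n c) := by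
  refine ⟨Cset_chain hc, fun t ht hsub => Set.Subset.antisymm hsub fun p hp => ?_⟩
  refine Cset_max hn hc p fun q hq => ?_
  by_cases hpq : p = q
  · exact Or.inl (hpq ▸ le_refl p)
  · exact ht hp (hsub hq) hpq

/-- The flag attached to a sequence. -/
def seqFlag (hn : 2 ≤ n) (hc : c ∈ Sset (n - 1) n) : Flag (P2 n) :=
  Flag.ofIsMaxChain _ (Cset_isMaxChain hn hc)

lemma mem_seqFlag {p : P2 n} : p ∈ seqFlag hn hc ↔ p ∈ Cset n c := Iff.rfl

end Chain

section FromFlag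

variable {n : ℕ}

/-- The set of second coordinates appearing in the `ψ` (true) part of a chain in column `i`. -/
def TJ (C : Flag (P2 n)) (i : ℕ) : Set ℕ :=
  {j | ∃ h : 1 ≤ i ∧ i < j ∧ j ≤ n, (⟨(true, i, j), h⟩ : P2 n) ∈ C}

lemma flag_exists_seq (hn : 2 ≤ n) (C : Flag (P2 n)) (t : ℕ) (ht : 1 < t ∧ t ≤ n)
    (hf : (⟨(false, 1, t), ⟨le_rfl, ht.1, ht.2⟩⟩ : P2 n) ∈ C)
    (htt : (⟨(true, 1, t), ⟨le_rfl, ht.1, ht.2⟩⟩ : P2 n) ∈ C) :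
    ∃ c ∈ Sset (n - 1) n, Cset n c = (C : Set (P2 n)) := by
  obtain ⟨ht1, ht2⟩ := ht
  -- all false elements of C are (1, j) with j ≤ t
  have F1 : ∀ p : P2 n, p ∈ C → p.1.1 = false → p.1.2.1 = 1 ∧ p.1.2.2 ≤ t := by
    intro p hp hb
    have hv2 : p.1.2.1 < p.1.2.2 := p.2.2.1
    have hv3 : p.1.2.2 ≤ n := p.2.2.2
    rcases C.le_or_le hp htt with h | h
    · have h' : (p.1.1 = true ∧ p.1.2.1 ≤ 1 ∧ p.1.2.2 ≤ t) ∨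
          (p.1.1 = false ∧ true = true ∧
            ((p.1.2.1 = 1 ∧ p.1.2.2 ≤ t) ∨ (p.1.2.1 ≤ 1 ∧ t = n))) := h
      have hv1 : 1 ≤ p.1.2.1 := p.2.1
      rcases h' with ⟨h, -⟩ | ⟨-, -, hd⟩
      · rw [hb] at h; exact absurd h (by decide)
      · rcases hd with ⟨h1, h2⟩ | ⟨h1, h2⟩
        · exact ⟨h1, h2⟩
        · constructor <;> omega
    · have h' : (true = p.1.1 ∧ 1 ≤ p.1.2.1 ∧ t ≤ p.1.2.2) ∨
          (true = false ∧ p.1.1 = true ∧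
            ((1 = 1 ∧ t ≤ p.1.2.2) ∨ (1 ≤ p.1.2.1 ∧ p.1.2.2 = n))) := h
      rcases h' with ⟨h, -⟩ | ⟨h, -⟩
      · rw [hb] at h; exact absurd h (by decide)
      · exact absurd h (by decide)
  -- all true elements of C have second coordinate ≥ t
  have F3 : ∀ p : P2 n, p ∈ C → p.1.1 = true → t ≤ p.1.2.2 := by
    intro p hp hb
    have hv3 : p.1.2.2 ≤ n := p.2.2.2
    rcases C.le_or_le hp hf with h | h
    · have h' : (p.1.1 = false ∧ p.1.2.1 ≤ 1 ∧ p.1.2.2 ≤ t) ∨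
          (p.1.1 = false ∧ false = true ∧
            ((p.1.2.1 = 1 ∧ p.1.2.2 ≤ t) ∨ (p.1.2.1 ≤ 1 ∧ t = n))) := h
      rcases h' with ⟨h, -⟩ | ⟨h, -⟩ <;> rw [hb] at h <;> exact absurd h (by decide)
    · have h' : (false = p.1.1 ∧ 1 ≤ p.1.2.1 ∧ t ≤ p.1.2.2) ∨
          (false = false ∧ p.1.1 = true ∧
            ((1 = 1 ∧ t ≤ p.1.2.2) ∨ (1 ≤ p.1.2.1 ∧ p.1.2.2 = n))) := h
      rcases h' with ⟨-, -, h2⟩ | ⟨-, -, hd⟩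
      · exact h2
      · rcases hd with ⟨-, h2⟩ | ⟨-, h2⟩ <;> omega
  -- top element
  have htop : (⟨(true, n - 1, n),
      ⟨(by omega : (1:ℕ) ≤ n - 1), (by omega : n - 1 < n), le_rfl⟩⟩ : P2 n) ∈ C := by
    refine Flag.mem_iff_forall_le_or_ge.mpr fun q hq => ?_
    refine Or.inr ?_
    have hv1 : 1 ≤ q.1.2.1 := q.2.1
    have hv2 : q.1.2.1 < q.1.2.2 := q.2.2.1
    have hv3 : q.1.2.2 ≤ n := q.2.2.2
    show (q.1.1 = true ∧ q.1.2.1 ≤ n - 1 ∧ q.1.2.2 ≤ n) ∨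
      (q.1.1 = false ∧ true = true ∧
        ((q.1.2.1 = 1 ∧ q.1.2.2 ≤ n) ∨ (q.1.2.1 ≤ n - 1 ∧ n = n)))
    rcases hbq : q.1.1 with _ | _
    · exact Or.inr ⟨rfl, rfl, Or.inr ⟨by omega, rfl⟩⟩
    · exact Or.inl ⟨rfl, by omega, by omega⟩
  -- step lemma: the minimum of a nonempty column i ≥ 2 also appears in column i-1
  have hstep : ∀ i, 2 ≤ i → i ≤ n - 1 → (TJ C i).Nonempty →
      sInf (TJ C i) ∈ TJ C (i - 1) := by
    intro i hi2 hin hnei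
    obtain ⟨hm1, hm2⟩ := Nat.sInf_mem hnei
    set m := sInf (TJ C i) with hmdef
    have hm1' : 1 ≤ i ∧ i < m ∧ m ≤ n := hm1
    refine ⟨⟨by omega, by omega, by omega⟩, ?_⟩
    refine Flag.mem_iff_forall_le_or_ge.mpr fun q hq => ?_
    have hv1 : 1 ≤ q.1.2.1 := q.2.1
    have hv2 : q.1.2.1 < q.1.2.2 := q.2.2.1
    have hv3 : q.1.2.2 ≤ n := q.2.2.2
    rcases hbq : q.1.1 with _ | _
    · -- q is false: q ≤ new element
      obtain ⟨hq1, hq2⟩ := F1 q hq hbq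
      have hqt : t ≤ m := F3 _ hm2 rfl
      refine Or.inr ?_
      show (q.1.1 = true ∧ q.1.2.1 ≤ i - 1 ∧ q.1.2.2 ≤ m) ∨
        (q.1.1 = false ∧ true = true ∧
          ((q.1.2.1 = 1 ∧ q.1.2.2 ≤ m) ∨ (q.1.2.1 ≤ i - 1 ∧ m = n)))
      exact Or.inr ⟨hbq, rfl, Or.inl ⟨hq1, by omega⟩⟩
    · -- q is true: compare with (true, i, m)
      rcases C.le_or_le hq hm2 with h | h
      · have h' : (q.1.1 = true ∧ q.1.2.1 ≤ i ∧ q.1.2.2 ≤ m) ∨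
            (q.1.1 = false ∧ true = true ∧
              ((q.1.2.1 = 1 ∧ q.1.2.2 ≤ m) ∨ (q.1.2.1 ≤ i ∧ m = n))) := h
        rcases h' with ⟨-, h1, h2⟩ | ⟨h, -⟩
        · -- q ≤ (i, m)
          rcases Nat.lt_or_ge q.1.2.1 i with hqi | hqi
          · -- q.1.2.1 ≤ i - 1
            refine Or.inr ?_
            show (q.1.1 = true ∧ q.1.2.1 ≤ i - 1 ∧ q.1.2.2 ≤ m) ∨
              (q.1.1 = false ∧ true = true ∧
                ((q.1.2.1 = 1 ∧ q.1.2.2 ≤ m) ∨ (q.1.2.1 ≤ i - 1 ∧ m = n)))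
            exact Or.inl ⟨hbq, by omega, by omega⟩
          · -- q.1.2.1 = i, hence q.1.2.2 = m
            have hqi' : q.1.2.1 = i := by omega
            have hval : 1 ≤ i ∧ i < q.1.2.2 ∧ q.1.2.2 ≤ n := by omega
            have hmem : q.1.2.2 ∈ TJ C i := by
              refine ⟨hval, ?_⟩
              have hqeq : q = ⟨(true, i, q.1.2.2), hval⟩ := by
                apply Subtype.ext
                show q.1 = (true, i, q.1.2.2)
                rw [← hbq, ← hqi']
              rwa [← hqeq]
            have : m ≤ q.1.2.2 := Nat.sInf_le hmem
            refine Or.inl ?_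
            show (true = q.1.1 ∧ i - 1 ≤ q.1.2.1 ∧ m ≤ q.1.2.2) ∨
              (true = false ∧ q.1.1 = true ∧
                ((i - 1 = 1 ∧ m ≤ q.1.2.2) ∨ (i - 1 ≤ q.1.2.1 ∧ q.1.2.2 = n)))
            exact Or.inl ⟨hbq.symm, by omega, by omega⟩
        · rw [hbq] at h; exact absurd h (by decide)
      · have h' : (true = q.1.1 ∧ i ≤ q.1.2.1 ∧ m ≤ q.1.2.2) ∨
            (true = false ∧ q.1.1 = true ∧
              ((i = 1 ∧ m ≤ q.1.2.2) ∨ (i ≤ q.1.2.1 ∧ q.1.2.2 = n))) := h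
        rcases h' with ⟨-, h1, h2⟩ | ⟨h, -⟩
        · -- (i, m) ≤ q
          refine Or.inl ?_
          show (true = q.1.1 ∧ i - 1 ≤ q.1.2.1 ∧ m ≤ q.1.2.2) ∨
            (true = false ∧ q.1.1 = true ∧
              ((i - 1 = 1 ∧ m ≤ q.1.2.2) ∨ (i - 1 ≤ q.1.2.1 ∧ q.1.2.2 = n)))
          exact Or.inl ⟨hbq.symm, by omega, by omega⟩
        · exact absurd h (by decide)
  -- all columns from 1 to n-1 are nonempty
  have htopTJ : n ∈ TJ C (n - 1) :=
    ⟨⟨by omega, by omega, le_rfl⟩, htop⟩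
  have hne : ∀ i, 1 ≤ i → i ≤ n - 1 → (TJ C i).Nonempty := by
    have H : ∀ d i, 1 ≤ i → i + d = n - 1 → (TJ C i).Nonempty := by
      intro d
      induction d with
      | zero =>
        intro i h1 h2
        refine ⟨n, ?_⟩
        rw [show i = n - 1 by omega]
        exact htopTJ
      | succ d IH =>
        intro i h1 h2
        have hn1 : (TJ C (i + 1)).Nonempty := IH (i + 1) (by omega) (by omega)
        have := hstep (i + 1) (by omega) (by omega) hn1
        rw [show i + 1 - 1 = i by omega] at this
        exact ⟨_, this⟩
    intro i h1 h2
    exact H (n - 1 - i) i h1 (by omega)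
  -- upper bound on column members
  have hup : ∀ i j, j ∈ TJ C i → i + 1 ≤ n - 1 → j ≤ sInf (TJ C (i + 1)) := by
    intro i j hj hi
    obtain ⟨hj1, hj2⟩ := hj
    obtain ⟨hm1, hm2⟩ := Nat.sInf_mem (hne (i + 1) (by omega) hi)
    rcases C.le_or_le hj2 hm2 with h | h
    · have h' : (true = true ∧ i ≤ i + 1 ∧ j ≤ sInf (TJ C (i + 1))) ∨
          (true = false ∧ true = true ∧
            ((i = 1 ∧ j ≤ sInf (TJ C (i + 1))) ∨
              (i ≤ i + 1 ∧ sInf (TJ C (i + 1)) = n))) := h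
      have hm1' : 1 ≤ i + 1 ∧ i + 1 < sInf (TJ C (i + 1)) ∧ sInf (TJ C (i + 1)) ≤ n := hm1
      have hj1' : 1 ≤ i ∧ i < j ∧ j ≤ n := hj1
      rcases h' with ⟨-, -, h2⟩ | ⟨h, -⟩
      · exact h2
      · exact absurd h (by decide)
    · have h' : (true = true ∧ i + 1 ≤ i ∧ sInf (TJ C (i + 1)) ≤ j) ∨
          (true = false ∧ true = true ∧
            ((i + 1 = 1 ∧ sInf (TJ C (i + 1)) ≤ j) ∨ (i + 1 ≤ i ∧ j = n))) := h
      rcases h' with ⟨-, h1, -⟩ | ⟨h, -⟩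
      · omega
      · exact absurd h (by decide)
  -- monotonicity of column minima
  have hmmono : ∀ d i, 1 ≤ i → i + d ≤ n - 1 → sInf (TJ C i) ≤ sInf (TJ C (i + d)) := by
    intro d
    induction d with
    | zero => intro i _ _; exact le_rfl
    | succ d IH =>
      intro i h1 h2
      refine le_trans (IH i h1 (by omega)) ?_
      have hmem := hstep (i + d + 1) (by omega) (by omega) (hne _ (by omega) (by omega))
      rw [show i + d + 1 - 1 = i + d by omega] at hmem
      calc sInf (TJ C (i + d)) ≤ sInf (TJ C (i + d + 1)) := Nat.sInf_le hmem
      _ = sInf (TJ C (i + (d + 1))) := by rw [show i + d + 1 = i + (d + 1) by omega]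
  -- the sequence
  have hcS : (fun k : Fin (n - 1) => sInf (TJ C ((k : ℕ) + 1))) ∈ Sset (n - 1) n := by
    rw [mem_Sset]
    constructor
    · intro k k' hkk
      have := hmmono ((k' : ℕ) - (k : ℕ)) ((k : ℕ) + 1) (by omega) (by omega)
      rw [show (k : ℕ) + 1 + ((k' : ℕ) - (k : ℕ)) = (k' : ℕ) + 1 by
        have := Fin.le_def.mp hkk; omega] at this
      exact this
    · intro k
      obtain ⟨h1, -⟩ := Nat.sInf_mem (hne ((k : ℕ) + 1) (by omega) (by omega))
      have h1' : 1 ≤ (k : ℕ) + 1 ∧ (k : ℕ) + 1 < sInf (TJ C ((k : ℕ) + 1)) ∧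
          sInf (TJ C ((k : ℕ) + 1)) ≤ n := h1
      constructor <;> omega
  refine ⟨_, hcS, ?_⟩
  -- Cset n c = ↑C
  have hcv : ∀ i, 1 ≤ i → i ≤ n - 1 →
      cv n (fun k => sInf (TJ C ((k : ℕ) + 1))) i = sInf (TJ C i) := by
    intro i h1 h2
    unfold cv
    rw [dif_pos (show i - 1 < n - 1 by omega)]
    simp only
    rw [show i - 1 + 1 = i by omega]
  have ht1' : sInf (TJ C 1) = t := by
    have hmem : t ∈ TJ C 1 := ⟨⟨le_rfl, ht1, ht2⟩, htt⟩
    have h1 : sInf (TJ C 1) ≤ t := Nat.sInf_le hmem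
    obtain ⟨hm1x, hm2⟩ := Nat.sInf_mem (hne 1 le_rfl (by omega))
    have h2 : t ≤ sInf (TJ C 1) := F3 _ hm2 rfl
    omega
  -- show ↑C ⊆ Cset, then conclude by maximality of C
  have hsub : (C : Set (P2 n)) ⊆ Cset n (fun k => sInf (TJ C ((k : ℕ) + 1))) := by
    intro p hp
    have hv1 : 1 ≤ p.1.2.1 := p.2.1
    have hv2 : p.1.2.1 < p.1.2.2 := p.2.2.1
    have hv3 : p.1.2.2 ≤ n := p.2.2.2
    show (p.1.1 = false ∧ p.1.2.1 = 1 ∧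
        p.1.2.2 ≤ cv n (fun k => sInf (TJ C ((k : ℕ) + 1))) 1) ∨
      (p.1.1 = true ∧ cv n (fun k => sInf (TJ C ((k : ℕ) + 1))) p.1.2.1 ≤ p.1.2.2 ∧
        p.1.2.2 ≤ cv n (fun k => sInf (TJ C ((k : ℕ) + 1))) (p.1.2.1 + 1))
    rcases hbp : p.1.1 with _ | _
    · obtain ⟨h1, h2⟩ := F1 p hp hbp
      refine Or.inl ⟨rfl, h1, ?_⟩
      rw [hcv 1 le_rfl (by omega), ht1']
      omega
    · have hpin : p.1.2.1 ≤ n - 1 := by omega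
      have hvalp : 1 ≤ p.1.2.1 ∧ p.1.2.1 < p.1.2.2 ∧ p.1.2.2 ≤ n := by omega
      have hpmem : p.1.2.2 ∈ TJ C p.1.2.1 := by
        refine ⟨hvalp, ?_⟩
        have hpeq : p = ⟨(true, p.1.2.1, p.1.2.2), hvalp⟩ := by
          apply Subtype.ext
          show p.1 = (true, p.1.2.1, p.1.2.2)
          rw [← hbp]
        rwa [← hpeq]
      refine Or.inr ⟨rfl, ?_, ?_⟩
      · rw [hcv _ (by omega) hpin]
        exact Nat.sInf_le hpmem
      · rcases Nat.lt_or_ge (p.1.2.1 + 1) n with h | h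
        · rw [hcv _ (by omega) (by omega)]
          exact hup _ _ hpmem (by omega)
        · rw [cv_big (by omega)]
          omega
  have hchain := Cset_chain hcS
  exact (C.max_chain' hchain hsub).symm

end FromFlag
-- final assembly

section Assembly

variable {n : ℕ}

lemma cv_eq_apply (c : Fin (n - 1) → ℕ) (k : Fin (n - 1)) :
    cv n c ((k : ℕ) + 1) = c k := by
  unfold cv
  rw [dif_pos (by omega : (k : ℕ) + 1 - 1 < n - 1)]
  exact congrArg c (Fin.ext (by simp))

lemma seqFlag_cross (hn : 2 ≤ n) {c : Fin (n - 1) → ℕ} (hc : c ∈ Sset (n - 1) n) :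
    ∃ j : ℕ, ∃ h : 1 < j ∧ j ≤ n,
      (⟨(false, 1, j), ⟨le_rfl, h.1, h.2⟩⟩ : P2 n) ∈ seqFlag hn hc ∧
      (⟨(true, 1, j), ⟨le_rfl, h.1, h.2⟩⟩ : P2 n) ∈ seqFlag hn hc := by
  obtain ⟨hm, hbd⟩ := mem_Sset.mp hc
  have hlow := cv_lb (fun i => (hbd i).1)
  have hhigh := cv_le_n (n := n) (c := c) (fun i => (hbd i).2)
  have hmono := cv_mono hm (fun i => (hbd i).2)
  have h2 : 2 ≤ cv n c 1 := hlow 1 (by omega) (by omega)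
  refine ⟨cv n c 1, ⟨by omega, hhigh 1⟩, ?_, ?_⟩
  · exact Or.inl ⟨rfl, rfl, le_rfl⟩
  · exact Or.inr ⟨rfl, le_rfl, hmono 1 2 (by omega)⟩

lemma Cset_inj (hn : 2 ≤ n) {c c' : Fin (n - 1) → ℕ}
    (hc : c ∈ Sset (n - 1) n) (hc' : c' ∈ Sset (n - 1) n)
    (h : Cset n c = Cset n c') : c = c' := by
  obtain ⟨hm, hbd⟩ := mem_Sset.mp hc
  obtain ⟨hm', hbd'⟩ := mem_Sset.mp hc'
  have hlow := cv_lb (fun i => (hbd i).1)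
  have hhigh := cv_le_n (n := n) (c := c) (fun i => (hbd i).2)
  have hmono := cv_mono hm (fun i => (hbd i).2)
  have hlow' := cv_lb (fun i => (hbd' i).1)
  have hhigh' := cv_le_n (n := n) (c := c') (fun i => (hbd' i).2)
  have hmono' := cv_mono hm' (fun i => (hbd' i).2)
  have key : ∀ (k : Fin (n - 1)), cv n c ((k : ℕ) + 1) = cv n c' ((k : ℕ) + 1) := by
    intro k
    have hk1 : 1 ≤ (k : ℕ) + 1 := by omega
    have hk2 : (k : ℕ) + 1 ≤ n - 1 := by omega
    have hval : 1 ≤ (k : ℕ) + 1 ∧ (k : ℕ) + 1 < cv n c ((k : ℕ) + 1) ∧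
        cv n c ((k : ℕ) + 1) ≤ n :=
      ⟨hk1, by have := hlow _ hk1 hk2; omega, hhigh _⟩
    have hval' : 1 ≤ (k : ℕ) + 1 ∧ (k : ℕ) + 1 < cv n c' ((k : ℕ) + 1) ∧
        cv n c' ((k : ℕ) + 1) ≤ n :=
      ⟨hk1, by have := hlow' _ hk1 hk2; omega, hhigh' _⟩
    have hq : (⟨(true, (k : ℕ) + 1, cv n c ((k : ℕ) + 1)), hval⟩ : P2 n) ∈ Cset n c :=
      Or.inr ⟨rfl, le_rfl, hmono ((k : ℕ) + 1) ((k : ℕ) + 1 + 1) (by omega)⟩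
    have hq' : (⟨(true, (k : ℕ) + 1, cv n c' ((k : ℕ) + 1)), hval'⟩ : P2 n) ∈ Cset n c' :=
      Or.inr ⟨rfl, le_rfl, hmono' ((k : ℕ) + 1) ((k : ℕ) + 1 + 1) (by omega)⟩
    rw [h] at hq
    rw [← h] at hq'
    have e1 : (true = false ∧ (k : ℕ) + 1 = 1 ∧
          cv n c ((k : ℕ) + 1) ≤ cv n c' 1) ∨
        (true = true ∧ cv n c' ((k : ℕ) + 1) ≤ cv n c ((k : ℕ) + 1) ∧
          cv n c ((k : ℕ) + 1) ≤ cv n c' ((k : ℕ) + 1 + 1)) := hq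
    have e2 : (true = false ∧ (k : ℕ) + 1 = 1 ∧
          cv n c' ((k : ℕ) + 1) ≤ cv n c 1) ∨
        (true = true ∧ cv n c ((k : ℕ) + 1) ≤ cv n c' ((k : ℕ) + 1) ∧
          cv n c' ((k : ℕ) + 1) ≤ cv n c ((k : ℕ) + 1 + 1)) := hq'
    rcases e1 with ⟨e, -⟩ | ⟨-, f1, -⟩
    · exact absurd e (by decide)
    · rcases e2 with ⟨e, -⟩ | ⟨-, f2, -⟩
      · exact absurd e (by decide)
      · omega
  funext k
  have := key k
  rwa [cv_eq_apply, cv_eq_apply] at this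

end Assembly

/-- For `n ≥ 2`, the number of maximal chains `C` of the poset
`P_{2,n}` containing both `(false,(1,j))` and `(true,(1,j))` for some
`1 < j ≤ n` equals the Catalan number `C_{n-1}`. -/
theorem numMaxChains_P2_lower (n : ℕ) (hn : 2 ≤ n) :
    Nat.card {C : Flag (P2 n) // ∃ j : ℕ, ∃ h : 1 < j ∧ j ≤ n,
        (⟨(false, 1, j), ⟨le_rfl, h.1, h.2⟩⟩ : P2 n) ∈ C ∧
        (⟨(true, 1, j), ⟨le_rfl, h.1, h.2⟩⟩ : P2 n) ∈ C} = catalan (n - 1) := by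
  classical
  set f : (Sset (n - 1) n : Finset (Fin (n - 1) → ℕ)) →
      {C : Flag (P2 n) // ∃ j : ℕ, ∃ h : 1 < j ∧ j ≤ n,
        (⟨(false, 1, j), ⟨le_rfl, h.1, h.2⟩⟩ : P2 n) ∈ C ∧
        (⟨(true, 1, j), ⟨le_rfl, h.1, h.2⟩⟩ : P2 n) ∈ C} :=
    fun cs => ⟨seqFlag hn cs.2, seqFlag_cross hn cs.2⟩ with hfdef
  have hbij : Function.Bijective f := by
    constructor
    · intro a b hab
      apply Subtype.ext
      refine Cset_inj hn a.2 b.2 ?_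
      have h1 : seqFlag hn a.2 = seqFlag hn b.2 := congrArg Subtype.val hab
      have h2 := congrArg (fun F : Flag (P2 n) => (F : Set (P2 n))) h1
      exact h2
    · rintro ⟨C, j, hj, h1, h2⟩
      obtain ⟨c, hc, heq⟩ := flag_exists_seq hn C j hj h1 h2
      refine ⟨⟨c, hc⟩, ?_⟩
      apply Subtype.ext
      show seqFlag hn hc = C
      apply SetLike.ext'
      exact heq
  calc Nat.card {C : Flag (P2 n) // ∃ j : ℕ, ∃ h : 1 < j ∧ j ≤ n,
        (⟨(false, 1, j), ⟨le_rfl, h.1, h.2⟩⟩ : P2 n) ∈ C ∧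
        (⟨(true, 1, j), ⟨le_rfl, h.1, h.2⟩⟩ : P2 n) ∈ C}
      = Nat.card (Sset (n - 1) n : Finset (Fin (n - 1) → ℕ)) :=
        (Nat.card_eq_of_bijective f hbij).symm
    _ = (Sset (n - 1) n).card := Nat.card_eq_finsetCard _
    _ = catalan (n - 1) := by
        have h := Sset_card_catalan (n - 1) (by omega)
        rwa [show n - 1 + 1 = n by omega] at h
end

section
/- Let n ≥ 2 be an integer. Every maximal chain C of the poset P_{2,n} contains exactly one pair σ = (i,j) (with 1 ≤ i < j ≤ n) such that both (false,σ) ∈ C and (true,σ) ∈ C; moreover this unique pair satisfies i = 1 or j = n. -/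
lemma P2.le_def {n : ℕ} (a b : P2 n) : a ≤ b ↔
    ((a.1.1 = b.1.1 ∧ a.1.2.1 ≤ b.1.2.1 ∧ a.1.2.2 ≤ b.1.2.2) ∨
    (a.1.1 = false ∧ b.1.1 = true ∧
      ((a.1.2.1 = 1 ∧ a.1.2.2 ≤ b.1.2.2) ∨ (a.1.2.1 ≤ b.1.2.1 ∧ b.1.2.2 = n)))) :=
  Iff.rfl

/-- For `n ≥ 2`, every maximal chain `C` of the poset `P_{2,n}`
contains exactly one pair `σ = (i,j)` (with `1 ≤ i < j ≤ n`) such that both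
`(false,σ) ∈ C` and `(true,σ) ∈ C`; moreover this unique pair satisfies
`i = 1` or `j = n`. -/
theorem maxChain_P2_unique_transition (n : ℕ) (hn : 2 ≤ n) (C : Flag (P2 n)) :
    (∃! σ : ℕ × ℕ, ∃ h : 1 ≤ σ.1 ∧ σ.1 < σ.2 ∧ σ.2 ≤ n,
        (⟨(false, σ), h⟩ : P2 n) ∈ C ∧ (⟨(true, σ), h⟩ : P2 n) ∈ C) ∧
    (∀ σ : ℕ × ℕ, ∀ h : 1 ≤ σ.1 ∧ σ.1 < σ.2 ∧ σ.2 ≤ n,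
        (⟨(false, σ), h⟩ : P2 n) ∈ C → (⟨(true, σ), h⟩ : P2 n) ∈ C →
        σ.1 = 1 ∨ σ.2 = n) := by
  classical
  have hb2 : (1:ℕ) ≤ 1 ∧ 1 < 2 ∧ 2 ≤ n := by omega
  have hbot : (⟨(false, 1, 2), hb2⟩ : P2 n) ∈ C := by
    refine Flag.mem_iff_forall_le_or_ge.mpr ?_
    rintro ⟨⟨bb, bi, bj⟩, g1, g2, g3⟩ _
    replace g1 : 1 ≤ bi := g1
    replace g2 : bi < bj := g2
    replace g3 : bj ≤ n := g3
    left
    show (false = bb ∧ 1 ≤ bi ∧ 2 ≤ bj) ∨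
      (false = false ∧ bb = true ∧ ((1 = 1 ∧ 2 ≤ bj) ∨ (1 ≤ bi ∧ bj = n)))
    cases bb with
    | false => exact Or.inl ⟨rfl, by omega, by omega⟩
    | true => exact Or.inr ⟨rfl, rfl, Or.inl ⟨rfl, by omega⟩⟩
  have ht2 : (1:ℕ) ≤ n - 1 ∧ n - 1 < n ∧ n ≤ n := by omega
  have htop : (⟨(true, n - 1, n), ht2⟩ : P2 n) ∈ C := by
    refine Flag.mem_iff_forall_le_or_ge.mpr ?_
    rintro ⟨⟨bb, bi, bj⟩, g1, g2, g3⟩ _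
    replace g1 : 1 ≤ bi := g1
    replace g2 : bi < bj := g2
    replace g3 : bj ≤ n := g3
    right
    show (bb = true ∧ bi ≤ n - 1 ∧ bj ≤ n) ∨
      (bb = false ∧ true = true ∧ ((bi = 1 ∧ bj ≤ n) ∨ (bi ≤ n - 1 ∧ n = n)))
    cases bb with
    | false => exact Or.inr ⟨rfl, rfl, Or.inr ⟨by omega, rfl⟩⟩
    | true => exact Or.inl ⟨rfl, by omega, by omega⟩
  -- maximal false element
  have hbdd : BddAbove {m | ∃ p : P2 n, p ∈ C ∧ p.1.1 = false ∧ p.1.2.1 + p.1.2.2 = m} := by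
    refine ⟨2 * n, ?_⟩
    rintro m ⟨p, _, _, rfl⟩
    have := p.2
    omega
  obtain ⟨σp, hσC, hσb, hσs⟩ :=
    Nat.sSup_mem (s := {m | ∃ p : P2 n, p ∈ C ∧ p.1.1 = false ∧ p.1.2.1 + p.1.2.2 = m})
      ⟨3, ⟨(false, 1, 2), hb2⟩, hbot, rfl, rfl⟩ hbdd
  have maxF : ∀ p : P2 n, p ∈ C → p.1.1 = false →
      p.1.2.1 ≤ σp.1.2.1 ∧ p.1.2.2 ≤ σp.1.2.2 := by
    intro p hp hpb
    have hsum : p.1.2.1 + p.1.2.2 ≤ σp.1.2.1 + σp.1.2.2 := by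
      rw [hσs]
      exact le_csSup hbdd ⟨p, hp, hpb, rfl⟩
    rcases C.le_or_le hp hσC with h | h <;> rw [P2.le_def] at h <;>
      rcases h with ⟨_, h1, h2⟩ | ⟨hc1, hc2, _⟩
    · exact ⟨h1, h2⟩
    · rw [hσb] at hc2; exact absurd hc2 (by simp)
    · omega
    · rw [hpb] at hc2; exact absurd hc2 (by simp)
  -- minimal true element
  obtain ⟨τp, hτC, hτb, hτs⟩ :=
    Nat.sInf_mem (s := {m | ∃ p : P2 n, p ∈ C ∧ p.1.1 = true ∧ p.1.2.1 + p.1.2.2 = m})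
      ⟨(n - 1) + n, ⟨(true, n - 1, n), ht2⟩, htop, rfl, rfl⟩
  have minT : ∀ p : P2 n, p ∈ C → p.1.1 = true →
      τp.1.2.1 ≤ p.1.2.1 ∧ τp.1.2.2 ≤ p.1.2.2 := by
    intro p hp hpb
    have hsum : τp.1.2.1 + τp.1.2.2 ≤ p.1.2.1 + p.1.2.2 := by
      rw [hτs]
      exact Nat.sInf_le ⟨p, hp, hpb, rfl⟩
    rcases C.le_or_le hp hτC with h | h <;> rw [P2.le_def] at h <;>
      rcases h with ⟨_, h1, h2⟩ | ⟨hc1, hc2, _⟩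
    · omega
    · rw [hpb] at hc1; exact absurd hc1 (by simp)
    · exact ⟨h1, h2⟩
    · rw [hτb] at hc1; exact absurd hc1 (by simp)
  -- the cross relation between σp and τp
  have hcross : (σp.1.2.1 = 1 ∧ σp.1.2.2 ≤ τp.1.2.2) ∨
      (σp.1.2.1 ≤ τp.1.2.1 ∧ τp.1.2.2 = n) := by
    rcases C.le_or_le hσC hτC with h | h <;> rw [P2.le_def] at h <;>
      rcases h with ⟨hb, _, _⟩ | ⟨hc1, hc2, hc⟩
    · rw [hσb, hτb] at hb; exact absurd hb (by simp)
    · exact hc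
    · rw [hσb, hτb] at hb; exact absurd hb (by simp)
    · rw [hτb] at hc1; exact absurd hc1 (by simp)
  -- existence of a transition pair
  have hex : ∃ σ : ℕ × ℕ, ∃ h : 1 ≤ σ.1 ∧ σ.1 < σ.2 ∧ σ.2 ≤ n,
      (⟨(false, σ), h⟩ : P2 n) ∈ C ∧ (⟨(true, σ), h⟩ : P2 n) ∈ C := by
    rcases hcross with ⟨h1, h2⟩ | ⟨h1, h2⟩
    · -- transition at σp
      refine ⟨σp.1.2, σp.2, ?_, ?_⟩
      · convert hσC using 1
        rw [show (⟨(false, σp.1.2), σp.2⟩ : P2 n) = σp from Subtype.ext (Prod.ext hσb.symm rfl)]; exact Iff.rfl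
      · refine Flag.mem_iff_forall_le_or_ge.mpr ?_
        intro b hb
        obtain ⟨g1, g2, g3⟩ := b.2
        cases hbb : b.1.1 with
        | false =>
          obtain ⟨k1, k2⟩ := maxF b hb hbb
          right
          show (b.1.1 = true ∧ b.1.2.1 ≤ σp.1.2.1 ∧ b.1.2.2 ≤ σp.1.2.2) ∨
            (b.1.1 = false ∧ true = true ∧
              ((b.1.2.1 = 1 ∧ b.1.2.2 ≤ σp.1.2.2) ∨ (b.1.2.1 ≤ σp.1.2.1 ∧ σp.1.2.2 = n)))
          exact Or.inr ⟨hbb, rfl, Or.inl ⟨by omega, k2⟩⟩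
        | true =>
          obtain ⟨k1, k2⟩ := minT b hb hbb
          left
          show (true = b.1.1 ∧ σp.1.2.1 ≤ b.1.2.1 ∧ σp.1.2.2 ≤ b.1.2.2) ∨
            (true = false ∧ b.1.1 = true ∧
              ((σp.1.2.1 = 1 ∧ σp.1.2.2 ≤ b.1.2.2) ∨ (σp.1.2.1 ≤ b.1.2.1 ∧ b.1.2.2 = n)))
          exact Or.inl ⟨hbb.symm, by omega, by omega⟩
    · -- transition at τp
      refine ⟨τp.1.2, τp.2, ?_, ?_⟩
      · refine Flag.mem_iff_forall_le_or_ge.mpr ?_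
        intro b hb
        obtain ⟨g1, g2, g3⟩ := b.2
        obtain ⟨s1, s2, s3⟩ := σp.2
        cases hbb : b.1.1 with
        | false =>
          obtain ⟨k1, k2⟩ := maxF b hb hbb
          right
          show (b.1.1 = false ∧ b.1.2.1 ≤ τp.1.2.1 ∧ b.1.2.2 ≤ τp.1.2.2) ∨
            (b.1.1 = false ∧ false = true ∧
              ((b.1.2.1 = 1 ∧ b.1.2.2 ≤ τp.1.2.2) ∨ (b.1.2.1 ≤ τp.1.2.1 ∧ τp.1.2.2 = n)))
          exact Or.inl ⟨hbb, by omega, by omega⟩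
        | true =>
          obtain ⟨k1, k2⟩ := minT b hb hbb
          left
          show (false = b.1.1 ∧ τp.1.2.1 ≤ b.1.2.1 ∧ τp.1.2.2 ≤ b.1.2.2) ∨
            (false = false ∧ b.1.1 = true ∧
              ((τp.1.2.1 = 1 ∧ τp.1.2.2 ≤ b.1.2.2) ∨ (τp.1.2.1 ≤ b.1.2.1 ∧ b.1.2.2 = n)))
          exact Or.inr ⟨rfl, hbb, Or.inr ⟨k1, by omega⟩⟩
      · convert hτC using 1
        rw [show (⟨(true, τp.1.2), τp.2⟩ : P2 n) = τp from Subtype.ext (Prod.ext hτb.symm rfl)]; exact Iff.rfl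
  -- uniqueness
  obtain ⟨σ, hσ, hfσ, htσ⟩ := hex
  have key : ∀ α β : ℕ × ℕ, ∀ hα : 1 ≤ α.1 ∧ α.1 < α.2 ∧ α.2 ≤ n,
      ∀ hβ : 1 ≤ β.1 ∧ β.1 < β.2 ∧ β.2 ≤ n,
      (⟨(true, α), hα⟩ : P2 n) ∈ C → (⟨(false, β), hβ⟩ : P2 n) ∈ C →
      (@LE.le (P2 n) (@Preorder.toLE _ (@PartialOrder.toPreorder _ (P2.instPartialOrder n)))
        ⟨(false, α), hα⟩ ⟨(false, β), hβ⟩) → α = β := by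
    intro α β hα hβ hta hfb hle
    have hle2 : (false = false ∧ α.1 ≤ β.1 ∧ α.2 ≤ β.2) ∨
        (false = false ∧ false = true ∧
          ((α.1 = 1 ∧ α.2 ≤ β.2) ∨ (α.1 ≤ β.1 ∧ β.2 = n))) := hle
    have hle' : α.1 ≤ β.1 ∧ α.2 ≤ β.2 := by
      rcases hle2 with ⟨_, u1, u2⟩ | ⟨_, u, _⟩
      · exact ⟨u1, u2⟩
      · simp at u
    rcases C.le_or_le hfb hta with h | h
    · have h' : (false = true ∧ β.1 ≤ α.1 ∧ β.2 ≤ α.2) ∨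
          (false = false ∧ true = true ∧
            ((β.1 = 1 ∧ β.2 ≤ α.2) ∨ (β.1 ≤ α.1 ∧ α.2 = n))) := h
      rcases h' with ⟨u, _, _⟩ | ⟨_, _, hc⟩
      · simp at u
      · obtain ⟨hα1, hα2, hα3⟩ := hα
        obtain ⟨hβ1, hβ2, hβ3⟩ := hβ
        rcases hc with ⟨c1, c2⟩ | ⟨c1, c2⟩
        · exact Prod.ext (by omega) (by omega)
        · exact Prod.ext (by omega) (by omega)
    · have h' : (true = false ∧ α.1 ≤ β.1 ∧ α.2 ≤ β.2) ∨
          (true = false ∧ false = true ∧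
            ((α.1 = 1 ∧ α.2 ≤ β.2) ∨ (α.1 ≤ β.1 ∧ β.2 = n))) := h
      rcases h' with ⟨u, _, _⟩ | ⟨u, _, _⟩ <;> simp at u
  constructor
  · refine ⟨σ, ⟨hσ, hfσ, htσ⟩, ?_⟩
    rintro τ ⟨hτ, hfτ, htτ⟩
    rcases C.le_or_le hfτ hfσ with h | h
    · exact key τ σ hτ hσ htτ hfσ h
    · exact (key σ τ hσ hτ htσ hfτ h).symm
  · intro ρ hρ hf ht
    rcases C.le_or_le hf ht with h | h
    · have h' : (false = true ∧ ρ.1 ≤ ρ.1 ∧ ρ.2 ≤ ρ.2) ∨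
          (false = false ∧ true = true ∧
            ((ρ.1 = 1 ∧ ρ.2 ≤ ρ.2) ∨ (ρ.1 ≤ ρ.1 ∧ ρ.2 = n))) := h
      rcases h' with ⟨u, _, _⟩ | ⟨_, _, hc⟩
      · simp at u
      · rcases hc with ⟨c1, _⟩ | ⟨_, c2⟩
        · exact Or.inl c1
        · exact Or.inr c2
    · have h' : (true = false ∧ ρ.1 ≤ ρ.1 ∧ ρ.2 ≤ ρ.2) ∨
          (true = false ∧ false = true ∧
            ((ρ.1 = 1 ∧ ρ.2 ≤ ρ.2) ∨ (ρ.1 ≤ ρ.1 ∧ ρ.2 = n))) := h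
      rcases h' with ⟨u, _, _⟩ | ⟨u, _, _⟩ <;> simp at u
end

section
/- Let n ≥ 2 be an integer. Every maximal chain of the poset P_{2,n} has exactly 2n − 2 elements. -/
namespace P2Aux

variable {n : ℕ}

/-- Rank function on `P2 n`. -/
def rk (x : P2 n) : ℕ := x.1.2.1 + x.1.2.2 + (if x.1.1 then 1 else 0) - 3

lemma rk_mk_false {i j : ℕ} (h : 1 ≤ i ∧ i < j ∧ j ≤ n) :
    rk (⟨(false, i, j), h⟩ : P2 n) = i + j - 3 := rfl

lemma rk_mk_true {i j : ℕ} (h : 1 ≤ i ∧ i < j ∧ j ≤ n) :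
    rk (⟨(true, i, j), h⟩ : P2 n) = i + j - 2 := by
  have h' := h
  obtain ⟨h1, h2, h3⟩ := h'
  have : rk (⟨(true, i, j), h⟩ : P2 n) = i + j + 1 - 3 := rfl
  omega

lemma rk_lt (hn : 2 ≤ n) (x : P2 n) : rk x < 2 * n - 2 := by
  obtain ⟨⟨xb, xi, xj⟩, h1, h2, h3⟩ := x
  replace h1 : 1 ≤ xi := h1
  replace h2 : xi < xj := h2
  replace h3 : xj ≤ n := h3
  cases xb
  · rw [rk_mk_false]; omega
  · rw [rk_mk_true]; omega

lemma rk_mono {a b : P2 n} (h : a ≤ b) : rk a ≤ rk b := by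
  obtain ⟨⟨ab, ai, aj⟩, ha1, ha2, ha3⟩ := a
  obtain ⟨⟨bb, bi, bj⟩, hb1, hb2, hb3⟩ := b
  replace ha1 : 1 ≤ ai := ha1
  replace ha2 : ai < aj := ha2
  replace ha3 : aj ≤ n := ha3
  replace hb1 : 1 ≤ bi := hb1
  replace hb2 : bi < bj := hb2
  replace hb3 : bj ≤ n := hb3
  have h' : (ab = bb ∧ ai ≤ bi ∧ aj ≤ bj) ∨
      (ab = false ∧ bb = true ∧ ((ai = 1 ∧ aj ≤ bj) ∨ (ai ≤ bi ∧ bj = n))) := h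
  rcases h' with ⟨e, h1, h2⟩ | ⟨e1, e2, h1 | h1⟩
  · subst e
    cases ab
    · rw [rk_mk_false, rk_mk_false]; omega
    · rw [rk_mk_true, rk_mk_true]; omega
  · subst e1; subst e2; rw [rk_mk_false, rk_mk_true]; omega
  · subst e1; subst e2; rw [rk_mk_false, rk_mk_true]; omega

lemma eq_of_le_of_rk_eq {a b : P2 n} (h : a ≤ b) (hr : rk a = rk b) : a = b := by
  obtain ⟨⟨ab, ai, aj⟩, ha1, ha2, ha3⟩ := a
  obtain ⟨⟨bb, bi, bj⟩, hb1, hb2, hb3⟩ := b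
  replace ha1 : 1 ≤ ai := ha1
  replace ha2 : ai < aj := ha2
  replace ha3 : aj ≤ n := ha3
  replace hb1 : 1 ≤ bi := hb1
  replace hb2 : bi < bj := hb2
  replace hb3 : bj ≤ n := hb3
  have h' : (ab = bb ∧ ai ≤ bi ∧ aj ≤ bj) ∨
      (ab = false ∧ bb = true ∧ ((ai = 1 ∧ aj ≤ bj) ∨ (ai ≤ bi ∧ bj = n))) := h
  rcases h' with ⟨e, h1, h2⟩ | ⟨e1, e2, h1 | h1⟩
  · subst e
    have hij : ai = bi ∧ aj = bj := by
      cases ab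
      · rw [rk_mk_false, rk_mk_false] at hr; omega
      · rw [rk_mk_true, rk_mk_true] at hr; omega
    obtain ⟨rfl, rfl⟩ := hij
    rfl
  · subst e1; subst e2; rw [rk_mk_false, rk_mk_true] at hr; omega
  · subst e1; subst e2; rw [rk_mk_false, rk_mk_true] at hr; omega

lemma between (hn : 2 ≤ n) {a b : P2 n} (hab : a ≤ b) (h2 : rk a + 2 ≤ rk b) :
    ∃ c : P2 n, a ≤ c ∧ c ≤ b ∧ rk c = rk a + 1 := by
  obtain ⟨⟨ab, ai, aj⟩, ha1, ha2, ha3⟩ := a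
  obtain ⟨⟨bb, bi, bj⟩, hb1, hb2, hb3⟩ := b
  replace ha1 : 1 ≤ ai := ha1
  replace ha2 : ai < aj := ha2
  replace ha3 : aj ≤ n := ha3
  replace hb1 : 1 ≤ bi := hb1
  replace hb2 : bi < bj := hb2
  replace hb3 : bj ≤ n := hb3
  have h' : (ab = bb ∧ ai ≤ bi ∧ aj ≤ bj) ∨
      (ab = false ∧ bb = true ∧ ((ai = 1 ∧ aj ≤ bj) ∨ (ai ≤ bi ∧ bj = n))) := hab
  rcases h' with ⟨e, h1, hj⟩ | ⟨e1, e2, ⟨e3, hj⟩ | ⟨h1, e3⟩⟩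
  · -- same bool
    subst e
    cases ab
    · rw [rk_mk_false, rk_mk_false] at h2
      by_cases hc : aj < bj
      · exact ⟨⟨(false, ai, aj + 1), ha1, by dsimp only; omega, by dsimp only; omega⟩,
          Or.inl ⟨rfl, le_rfl, by dsimp only; omega⟩,
          Or.inl ⟨rfl, h1, by dsimp only; omega⟩,
          by rw [rk_mk_false, rk_mk_false]; omega⟩
      · exact ⟨⟨(false, ai + 1, aj), by dsimp only; omega, by dsimp only; omega,
            by dsimp only; omega⟩,
          Or.inl ⟨rfl, by dsimp only; omega, le_rfl⟩,
          Or.inl ⟨rfl, by dsimp only; omega, by dsimp only; omega⟩,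
          by rw [rk_mk_false, rk_mk_false]; omega⟩
    · rw [rk_mk_true, rk_mk_true] at h2
      by_cases hc : aj < bj
      · exact ⟨⟨(true, ai, aj + 1), ha1, by dsimp only; omega, by dsimp only; omega⟩,
          Or.inl ⟨rfl, le_rfl, by dsimp only; omega⟩,
          Or.inl ⟨rfl, h1, by dsimp only; omega⟩,
          by rw [rk_mk_true, rk_mk_true]; omega⟩
      · exact ⟨⟨(true, ai + 1, aj), by dsimp only; omega, by dsimp only; omega,
            by dsimp only; omega⟩,
          Or.inl ⟨rfl, by dsimp only; omega, le_rfl⟩,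
          Or.inl ⟨rfl, by dsimp only; omega, by dsimp only; omega⟩,
          by rw [rk_mk_true, rk_mk_true]; omega⟩
  · -- cross, ai = 1, aj ≤ bj
    subst e1; subst e2; subst e3
    rw [rk_mk_false, rk_mk_true] at h2
    by_cases hc : aj < bj
    · exact ⟨⟨(false, 1, aj + 1), le_rfl, by dsimp only; omega, by dsimp only; omega⟩,
        Or.inl ⟨rfl, le_rfl, by dsimp only; omega⟩,
        Or.inr ⟨rfl, rfl, Or.inl ⟨rfl, by dsimp only; omega⟩⟩,
        by rw [rk_mk_false, rk_mk_false]; omega⟩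
    · exact ⟨⟨(true, 1, aj), le_rfl, by dsimp only; omega, by dsimp only; omega⟩,
        Or.inr ⟨rfl, rfl, Or.inl ⟨rfl, le_rfl⟩⟩,
        Or.inl ⟨rfl, by dsimp only; omega, by dsimp only; omega⟩,
        by rw [rk_mk_true, rk_mk_false]; omega⟩
  · -- cross, ai ≤ bi, bj = n
    subst e1; subst e2
    rw [rk_mk_false, rk_mk_true] at h2
    by_cases hc : aj < n
    · exact ⟨⟨(false, ai, aj + 1), ha1, by dsimp only; omega, by dsimp only; omega⟩,
        Or.inl ⟨rfl, le_rfl, by dsimp only; omega⟩,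
        Or.inr ⟨rfl, rfl, Or.inr ⟨by dsimp only; omega, by dsimp only; omega⟩⟩,
        by rw [rk_mk_false, rk_mk_false]; omega⟩
    · exact ⟨⟨(true, ai, n), ha1, by dsimp only; omega, le_rfl⟩,
        Or.inr ⟨rfl, rfl, Or.inr ⟨le_rfl, rfl⟩⟩,
        Or.inl ⟨rfl, by dsimp only; omega, by dsimp only; omega⟩,
        by rw [rk_mk_true, rk_mk_false]; omega⟩

/-- Bottom element. -/
def bot (hn : 2 ≤ n) : P2 n := ⟨(false, 1, 2), le_rfl, by dsimp only; omega, hn⟩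

/-- Top element. -/
def top (hn : 2 ≤ n) : P2 n :=
  ⟨(true, n - 1, n), by dsimp only; omega, by dsimp only; omega, le_rfl⟩

lemma bot_le (hn : 2 ≤ n) (x : P2 n) : bot hn ≤ x := by
  obtain ⟨⟨xb, xi, xj⟩, h1, h2, h3⟩ := x
  replace h1 : 1 ≤ xi := h1
  replace h2 : xi < xj := h2
  replace h3 : xj ≤ n := h3
  cases xb
  · exact Or.inl ⟨rfl, by dsimp only [bot]; omega, by dsimp only [bot]; omega⟩
  · exact Or.inr ⟨rfl, rfl, Or.inl ⟨rfl, by dsimp only [bot]; omega⟩⟩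

lemma le_top (hn : 2 ≤ n) (x : P2 n) : x ≤ top hn := by
  obtain ⟨⟨xb, xi, xj⟩, h1, h2, h3⟩ := x
  replace h1 : 1 ≤ xi := h1
  replace h2 : xi < xj := h2
  replace h3 : xj ≤ n := h3
  cases xb
  · exact Or.inr ⟨rfl, rfl, Or.inr ⟨by dsimp only [top]; omega, rfl⟩⟩
  · exact Or.inl ⟨rfl, by dsimp only [top]; omega, by dsimp only [top]; omega⟩

lemma rk_bot (hn : 2 ≤ n) : rk (bot hn) = 0 := rfl

lemma rk_top (hn : 2 ≤ n) : rk (top hn) = 2 * n - 3 := by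
  rw [top, rk_mk_true]; omega

end P2Aux

open P2Aux in
/-- For `n ≥ 2`, every maximal chain of the poset `P_{2,n}`
has exactly `2n − 2` elements. -/
theorem maxChain_P2_card (n : ℕ) (hn : 2 ≤ n) (C : Flag (P2 n)) :
    (C : Set (P2 n)).ncard = 2 * n - 2 := by
  classical
  have hinj : Set.InjOn rk (C : Set (P2 n)) := by
    intro x hx y hy hxy
    rcases C.le_or_le hx hy with h | h
    · exact eq_of_le_of_rk_eq h hxy
    · exact (eq_of_le_of_rk_eq h hxy.symm).symm
  have hbotC : bot hn ∈ C :=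
    Flag.mem_iff_forall_le_or_ge.2 fun b _ => Or.inl (bot_le hn b)
  have htopC : top hn ∈ C :=
    Flag.mem_iff_forall_le_or_ge.2 fun b _ => Or.inr (le_top hn b)
  have hsub : rk '' (C : Set (P2 n)) ⊆ Set.Iio (2 * n - 2) := by
    rintro r ⟨x, _, rfl⟩; exact rk_lt hn x
  have hCfin : (C : Set (P2 n)).Finite :=
    Set.Finite.of_finite_image ((Set.finite_Iio _).subset hsub) hinj
  have himg : rk '' (C : Set (P2 n)) = Set.Iio (2 * n - 2) := by
    refine Set.Subset.antisymm hsub ?_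
    intro r hr
    simp only [Set.mem_Iio] at hr
    by_contra hrnot
    have hr0 : r ≠ 0 := by
      rintro rfl; exact hrnot ⟨bot hn, hbotC, rk_bot hn⟩
    have hrtop : r ≠ 2 * n - 3 := by
      rintro rfl; exact hrnot ⟨top hn, htopC, rk_top hn⟩
    set A : Set (P2 n) := {x | x ∈ (C : Set (P2 n)) ∧ rk x < r} with hA
    set B : Set (P2 n) := {x | x ∈ (C : Set (P2 n)) ∧ r < rk x} with hB
    have hAne : A.Nonempty := ⟨bot hn, hbotC, by rw [rk_bot hn]; omega⟩
    have hBne : B.Nonempty := ⟨top hn, htopC, by rw [rk_top hn]; omega⟩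
    have hAfin : A.Finite := hCfin.subset fun x hx => hx.1
    have hBfin : B.Finite := hCfin.subset fun x hx => hx.1
    obtain ⟨a, haA, hamax⟩ : ∃ a ∈ A, ∀ a' ∈ A, rk a ≤ rk a' → rk a = rk a' := by
      obtain ⟨a, ha, h⟩ := hAfin.exists_maximalFor rk A hAne
      exact ⟨a, ha, fun x hx hle => le_antisymm hle (h hx hle)⟩
    obtain ⟨b, hbB, hbmin⟩ : ∃ b ∈ B, ∀ b' ∈ B, rk b' ≤ rk b → rk b = rk b' := by
      obtain ⟨b, hb, h⟩ := hBfin.exists_minimalFor rk B hBne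
      exact ⟨b, hb, fun x hx hle => le_antisymm (h hx hle) hle⟩
    have haMax : ∀ x ∈ A, x ≤ a := by
      intro x hx
      rcases C.le_or_le hx.1 haA.1 with h | h
      · exact h
      · exact (eq_of_le_of_rk_eq h (hamax x hx (rk_mono h))).ge
    have hbMin : ∀ x ∈ B, b ≤ x := by
      intro x hx
      rcases C.le_or_le hbB.1 hx.1 with h | h
      · exact h
      · exact (eq_of_le_of_rk_eq h (hbmin x hx (rk_mono h)).symm).ge
    have hab : a ≤ b := by
      rcases C.le_or_le haA.1 hbB.1 with h | h
      · exact h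
      · exact absurd (rk_mono h) (by have := haA.2; have := hbB.2; omega)
    have hrk2 : rk a + 2 ≤ rk b := by have := haA.2; have := hbB.2; omega
    obtain ⟨c, hac, hcb, hrc⟩ := between hn hab hrk2
    have hcC : c ∈ C := by
      refine Flag.mem_iff_forall_le_or_ge.2 fun x hx => ?_
      by_cases hlt : rk x < r
      · exact Or.inr ((haMax x ⟨hx, hlt⟩).trans hac)
      · have hgt : r < rk x := by
          rcases lt_or_eq_of_le (not_lt.1 hlt) with h | h
          · exact h
          · exact absurd ⟨x, hx, h.symm⟩ hrnot
        exact Or.inl (hcb.trans (hbMin x ⟨hx, hgt⟩))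
    have h1 := haA.2
    by_cases hlt : rk c < r
    · have := rk_mono (haMax c ⟨hcC, hlt⟩); omega
    · have hgt : r < rk c := by
        rcases lt_or_eq_of_le (not_lt.1 hlt) with h | h
        · exact h
        · exact absurd ⟨c, hcC, h.symm⟩ hrnot
      have := rk_mono (hbMin c ⟨hcC, hgt⟩); have := hbB.2; omega
  calc (C : Set (P2 n)).ncard = (rk '' (C : Set (P2 n))).ncard :=
        (Set.ncard_image_of_injOn hinj).symm
    _ = (Set.Iio (2 * n - 2)).ncard := by rw [himg]
    _ = 2 * n - 2 := by
        rw [show Set.Iio (2 * n - 2) = ↑(Finset.range (2 * n - 2)) by ext; simp,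
          Set.ncard_coe_finset, Finset.card_range]
end

section
/- Let n ≥ 4. Each of the following six families of quadratic polynomials lies in the kernel of the ℂ-algebra homomorphism φ : S → R: (1) ψ_{il}ψ_{jk} − ψ_{ik}ψ_{jl} + ψ_{ij}ψ_{kl} for 1 ≤ i < j < k < l ≤ n; (2) ψ_{in}ξ_{jn} − ψ_{jn}ξ_{in} for 1 ≤ i < j < n; (3) ψ_{1j}ξ_{kn} − ψ_{kn}ξ_{1j} for 1 < j < n and 1 < k < n; (4) ψ_{1k}ξ_{1l} − ψ_{1l}ξ_{1k} for 1 < k < l ≤ n; (5) ξ_{1l}ψ_{jk} − ξ_{1k}ψ_{jl} + ξ_{1j}ψ_{kl} for 1 < j < k < l < n; (6) ξ_{in}ψ_{jk} − ξ_{jn}ψ_{ik} + ξ_{kn}ψ_{ij} for 1 ≤ i < j < k < n. -/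
open MvPolynomial

/-- Variables of the ring `R`: `s`, `t`, and `x_{1,j}`, `x_{2,j}`. -/
inductive RVar : Type
  | s : RVar
  | t : RVar
  | x1 : ℕ → RVar
  | x2 : ℕ → RVar

/-- The polynomial ring `R = ℂ[s, t, x_{1,j}, x_{2,j}]`. -/
abbrev Rring : Type := MvPolynomial RVar ℂ

/-- The `2×2` minor `m_{ij}` on columns `i < j` of the `2×n` matrix whose first
column is `(1,0)ᵀ`, last column is `(0,1)ᵀ`, and `j`-th column is
`(x_{1,j}, x_{2,j})ᵀ` for `1 < j < n`:  `m_{1n} = 1`, `m_{1i} = x_{2,i}`,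
`m_{jn} = x_{1,j}`, and `m_{ij} = x_{1,i}x_{2,j} − x_{1,j}x_{2,i}`. -/
noncomputable def minor (n i j : ℕ) : Rring :=
  if i = 1 ∧ j = n then 1
  else if i = 1 then X (RVar.x2 j)
  else if j = n then X (RVar.x1 i)
  else X (RVar.x1 i) * X (RVar.x2 j) - X (RVar.x1 j) * X (RVar.x2 i)

/-- Variables of the ring `S`: ψ-variables `(true,(i,j))` for all pairs
`1 ≤ i < j ≤ n`, and ξ-variables `(false,(i,j))` for those pairs with
`i = 1` or `j = n`. -/
def SVar (n : ℕ) : Type :=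
  {v : Bool × ℕ × ℕ //
    1 ≤ v.2.1 ∧ v.2.1 < v.2.2 ∧ v.2.2 ≤ n ∧ (v.1 = true ∨ v.2.1 = 1 ∨ v.2.2 = n)}

/-- The polynomial ring `S = ℂ[ψ_{ij}, ξ_{ij}]`. -/
abbrev Sring (n : ℕ) : Type := MvPolynomial (SVar n) ℂ

/-- The variable `ψ_{ij}` of `S` (for `1 ≤ i < j ≤ n`). -/
noncomputable def psi (n i j : ℕ) : Sring n :=
  if h : 1 ≤ i ∧ i < j ∧ j ≤ n then
    X ⟨(true, i, j), ⟨h.1, h.2.1, h.2.2, Or.inl rfl⟩⟩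
  else 0

/-- The variable `ξ_{ij}` of `S` (for `1 ≤ i < j ≤ n` with `i = 1` or `j = n`). -/
noncomputable def xi (n i j : ℕ) : Sring n :=
  if h : 1 ≤ i ∧ i < j ∧ j ≤ n ∧ (i = 1 ∨ j = n) then
    X ⟨(false, i, j), ⟨h.1, h.2.1, h.2.2.1, Or.inr h.2.2.2⟩⟩
  else 0

/-- The ℂ-algebra homomorphism `φ : S → R`, `ψ_{ij} ↦ t·m_{ij}`, `ξ_{ij} ↦ s·m_{ij}`. -/
noncomputable def phi (n : ℕ) : Sring n →ₐ[ℂ] Rring :=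
  aeval fun v : SVar n =>
    (if v.1.1 = true then X RVar.t else X RVar.s) * minor n v.1.2.1 v.1.2.2


lemma phi_psi (n i j : ℕ) (h : 1 ≤ i ∧ i < j ∧ j ≤ n) :
    phi n (psi n i j) = X RVar.t * minor n i j := by
  rw [psi, dif_pos h, phi]
  exact (aeval_X _ _).trans (by simp)

lemma phi_xi (n i j : ℕ) (h : 1 ≤ i ∧ i < j ∧ j ≤ n ∧ (i = 1 ∨ j = n)) :
    phi n (xi n i j) = X RVar.s * minor n i j := by
  rw [xi, dif_pos h, phi]
  exact (aeval_X _ _).trans (by simp)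

lemma minor_1n (n : ℕ) : minor n 1 n = 1 := by simp [minor]

lemma minor_1j (n j : ℕ) (hj : j ≠ n) : minor n 1 j = X (RVar.x2 j) := by
  simp [minor, hj]

lemma minor_in (n i : ℕ) (hi : i ≠ 1) : minor n i n = X (RVar.x1 i) := by
  simp [minor, hi]

lemma minor_gen (n i j : ℕ) (hi : i ≠ 1) (hj : j ≠ n) :
    minor n i j = X (RVar.x1 i) * X (RVar.x2 j) - X (RVar.x1 j) * X (RVar.x2 i) := by
  simp [minor, hi, hj]

lemma plucker (n i j k l : ℕ) (h1 : 1 ≤ i) (h2 : i < j) (h3 : j < k)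
    (h4 : k < l) (h5 : l ≤ n) :
    minor n i l * minor n j k - minor n i k * minor n j l +
      minor n i j * minor n k l = 0 := by
  have hj1 : j ≠ 1 := by omega
  have hk1 : k ≠ 1 := by omega
  have hjn : j ≠ n := by omega
  have hkn : k ≠ n := by omega
  rcases eq_or_ne i 1 with hi | hi <;> rcases eq_or_ne l n with hl | hl
  · subst hi
    rw [hl, minor_1n, minor_gen n j k hj1 hkn, minor_1j n k hkn,
      minor_in n j hj1, minor_1j n j hjn, minor_in n k hk1]
    ring
  · subst hi
    rw [minor_1j n l hl, minor_gen n j k hj1 hkn, minor_1j n k hkn,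
      minor_gen n j l hj1 hl, minor_1j n j hjn, minor_gen n k l hk1 hl]
    ring
  · rw [hl, minor_in n i hi, minor_gen n j k hj1 hkn, minor_gen n i k hi hkn,
      minor_in n j hj1, minor_gen n i j hi hjn, minor_in n k hk1]
    ring
  · rw [minor_gen n i l hi hl, minor_gen n j k hj1 hkn, minor_gen n i k hi hkn,
      minor_gen n j l hj1 hl, minor_gen n i j hi hjn, minor_gen n k l hk1 hl]
    ring

/-- For `n ≥ 4`, all six families of quadrics lie in the
kernel of `φ : S → R`. -/
theorem quadrics_mem_ker_phi (n : ℕ) (hn : 4 ≤ n) :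
    (∀ i j k l, 1 ≤ i → i < j → j < k → k < l → l ≤ n →
      psi n i l * psi n j k - psi n i k * psi n j l + psi n i j * psi n k l ∈
        RingHom.ker (phi n)) ∧
    (∀ i j, 1 ≤ i → i < j → j < n →
      psi n i n * xi n j n - psi n j n * xi n i n ∈ RingHom.ker (phi n)) ∧
    (∀ j k, 1 < j → j < n → 1 < k → k < n →
      psi n 1 j * xi n k n - psi n k n * xi n 1 j ∈ RingHom.ker (phi n)) ∧
    (∀ k l, 1 < k → k < l → l ≤ n →
      psi n 1 k * xi n 1 l - psi n 1 l * xi n 1 k ∈ RingHom.ker (phi n)) ∧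
    (∀ j k l, 1 < j → j < k → k < l → l < n →
      xi n 1 l * psi n j k - xi n 1 k * psi n j l + xi n 1 j * psi n k l ∈
        RingHom.ker (phi n)) ∧
    (∀ i j k, 1 ≤ i → i < j → j < k → k < n →
      xi n i n * psi n j k - xi n j n * psi n i k + xi n k n * psi n i j ∈
        RingHom.ker (phi n)) := by
  refine ⟨?_, ?_, ?_, ?_, ?_, ?_⟩
  · intro i j k l h1 h2 h3 h4 h5
    rw [RingHom.mem_ker, map_add, map_sub, map_mul, map_mul, map_mul,
      phi_psi n i l ⟨by omega, by omega, by omega⟩,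
      phi_psi n j k ⟨by omega, by omega, by omega⟩,
      phi_psi n i k ⟨by omega, by omega, by omega⟩,
      phi_psi n j l ⟨by omega, by omega, by omega⟩,
      phi_psi n i j ⟨by omega, by omega, by omega⟩,
      phi_psi n k l ⟨by omega, by omega, by omega⟩]
    linear_combination (X RVar.t * X RVar.t) * plucker n i j k l h1 h2 h3 h4 h5
  · intro i j h1 h2 h3
    rw [RingHom.mem_ker, map_sub, map_mul, map_mul,
      phi_psi n i n ⟨by omega, by omega, by omega⟩,
      phi_xi n j n ⟨by omega, by omega, by omega, Or.inr rfl⟩,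
      phi_psi n j n ⟨by omega, by omega, by omega⟩,
      phi_xi n i n ⟨by omega, by omega, by omega, Or.inr rfl⟩]
    ring
  · intro j k h1 h2 h3 h4
    rw [RingHom.mem_ker, map_sub, map_mul, map_mul,
      phi_psi n 1 j ⟨by omega, by omega, by omega⟩,
      phi_xi n k n ⟨by omega, by omega, by omega, Or.inr rfl⟩,
      phi_psi n k n ⟨by omega, by omega, by omega⟩,
      phi_xi n 1 j ⟨by omega, by omega, by omega, Or.inl rfl⟩]
    ring
  · intro k l h1 h2 h3
    rw [RingHom.mem_ker, map_sub, map_mul, map_mul,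
      phi_psi n 1 k ⟨by omega, by omega, by omega⟩,
      phi_xi n 1 l ⟨by omega, by omega, by omega, Or.inl rfl⟩,
      phi_psi n 1 l ⟨by omega, by omega, by omega⟩,
      phi_xi n 1 k ⟨by omega, by omega, by omega, Or.inl rfl⟩]
    ring
  · intro j k l h1 h2 h3 h4
    rw [RingHom.mem_ker, map_add, map_sub, map_mul, map_mul, map_mul,
      phi_xi n 1 l ⟨by omega, by omega, by omega, Or.inl rfl⟩,
      phi_psi n j k ⟨by omega, by omega, by omega⟩,
      phi_xi n 1 k ⟨by omega, by omega, by omega, Or.inl rfl⟩,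
      phi_psi n j l ⟨by omega, by omega, by omega⟩,
      phi_xi n 1 j ⟨by omega, by omega, by omega, Or.inl rfl⟩,
      phi_psi n k l ⟨by omega, by omega, by omega⟩]
    linear_combination (X RVar.s * X RVar.t) *
      plucker n 1 j k l (by omega) (by omega) (by omega) (by omega) (by omega)
  · intro i j k h1 h2 h3 h4
    rw [RingHom.mem_ker, map_add, map_sub, map_mul, map_mul, map_mul,
      phi_xi n i n ⟨by omega, by omega, by omega, Or.inr rfl⟩,
      phi_psi n j k ⟨by omega, by omega, by omega⟩,
      phi_xi n j n ⟨by omega, by omega, by omega, Or.inr rfl⟩,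
      phi_psi n i k ⟨by omega, by omega, by omega⟩,
      phi_xi n k n ⟨by omega, by omega, by omega, Or.inr rfl⟩,
      phi_psi n i j ⟨by omega, by omega, by omega⟩]
    linear_combination (X RVar.s * X RVar.t) *
      plucker n i j k n h1 h2 h3 h4 (le_refl n)
end
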